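/- Let G=(V,E) be a graph with two specified nonadjacent edges e1=s1t1 and e2=s2t2. Suppose G has a 3-separation (G1,G2) with separating set {x,y,z} such that G1⁺:=(V1, E1∪E(T)) is 3-connected and e1,e2∉E1∖E(T), where G1=(V1,E1) and T is the triangle on x,y,z. Then G⁺:=(V, E∪E(T)) has a K4*-minor if and only if G has a K4*-minor. -/

import Mathlib

open SimpleGraph

-- ============ Minors and planarity ============

/-- `H` is a minor of `G`, witnessed by disjoint connected branch sets. -/
def HasGraphMinor {V W : Type} (G : SimpleGraph V) (H : SimpleGraph W) : Prop :=
  ∃ B : W → Set V,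
    (∀ w, (G.induce (B w)).Connected) ∧
    (∀ w₁ w₂, w₁ ≠ w₂ → Disjoint (B w₁) (B w₂)) ∧
    (∀ w₁ w₂, H.Adj w₁ w₂ → ∃ a ∈ B w₁, ∃ b ∈ B w₂, G.Adj a b)

/-- Planarity, via Wagner's characterization: no `K₅` minor and no `K₃,₃` minor. -/
def IsPlanar {V : Type} (G : SimpleGraph V) : Prop :=
  ¬ HasGraphMinor G (⊤ : SimpleGraph (Fin 5)) ∧
  ¬ HasGraphMinor G (completeBipartiteGraph (Fin 3) (Fin 3))

def AdjBetween {V : Type} (G : SimpleGraph V) (A B : Set V) : Prop :=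
  ∃ a ∈ A, ∃ b ∈ B, G.Adj a b

/-- Rooted branch sets: disjoint connected sets, the `i`-th one containing the root `r i`. -/
def RootedBranchSets {V : Type} (G : SimpleGraph V) (B : Fin 4 → Set V) (r : Fin 4 → V) : Prop :=
  (∀ i, r i ∈ B i) ∧ (∀ i, (G.induce (B i)).Connected) ∧
  (∀ i j, i ≠ j → Disjoint (B i) (B j))

/-- A rooted minor isomorphic to the `4`-cycle `a b c d` (in this cyclic order). -/
def HasFMinorAux {V : Type} (G : SimpleGraph V) (a b c d : V) : Prop :=
  ∃ B : Fin 4 → Set V, RootedBranchSets G B ![a, b, c, d] ∧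
    AdjBetween G (B 0) (B 1) ∧ AdjBetween G (B 1) (B 2) ∧
    AdjBetween G (B 2) (B 3) ∧ AdjBetween G (B 3) (B 0)

/-- `G` contains a subgraph contractible to `F` (the 4-cycle `s₁ s₂ t₁ t₂`, so that
`s₁t₁` and `s₂t₂` are the diagonals), up to interchanging `s₁` with `t₁` and `s₂` with `t₂`. -/
def HasFMinor {V : Type} (G : SimpleGraph V) (s₁ t₁ s₂ t₂ : V) : Prop :=
  HasFMinorAux G s₁ s₂ t₁ t₂ ∨ HasFMinorAux G t₁ s₂ s₁ t₂ ∨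
  HasFMinorAux G s₁ t₂ t₁ s₂ ∨ HasFMinorAux G t₁ t₂ s₁ s₂

/-- A rooted `K₄`-minor on the roots `s₁,t₁,s₂,t₂` (this is the `K₄*`-minor containing the
specified edges `e₁ = s₁t₁` and `e₂ = s₂t₂`; it is symmetric under interchanging `s₁` with `t₁`
and `s₂` with `t₂`). -/
def HasK4starMinor {V : Type} (G : SimpleGraph V) (s₁ t₁ s₂ t₂ : V) : Prop :=
  ∃ B : Fin 4 → Set V, RootedBranchSets G B ![s₁, t₁, s₂, t₂] ∧
    ∀ i j : Fin 4, i ≠ j → AdjBetween G (B i) (B j)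

-- ============ Connectivity and separations ============

/-- `G` is `k`-connected: more than `k` vertices, and deleting fewer than `k` vertices
leaves a connected graph. -/
def IsKConnected {V : Type} (k : ℕ) (G : SimpleGraph V) : Prop :=
  k < Nat.card V ∧ ∀ S : Set V, S.ncard < k → (G.induce Sᶜ).Connected

/-- A separation of `G`: a pair of edge-disjoint non-spanning subgraphs whose union is `G`. -/
def IsSeparation {V : Type} (G : SimpleGraph V) (G₁ G₂ : G.Subgraph) : Prop :=
  G₁ ⊔ G₂ = ⊤ ∧ Disjoint G₁.edgeSet G₂.edgeSet ∧
  G₁.verts ≠ Set.univ ∧ G₂.verts ≠ Set.univ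

def IsKSeparation {V : Type} (G : SimpleGraph V) (G₁ G₂ : G.Subgraph) (k : ℕ) : Prop :=
  IsSeparation G G₁ G₂ ∧ (G₁.verts ∩ G₂.verts).ncard = k

/-- The separation `(G₁,G₂)` separates the edges `e₁` and `e₂` (each part contains
precisely one of them; with edge-disjointness this is the displayed condition). -/
def SeparatesEdgePair {V : Type} {G : SimpleGraph V} (G₁ G₂ : G.Subgraph) (e₁ e₂ : Sym2 V) : Prop :=
  (e₁ ∈ G₁.edgeSet ∧ e₂ ∈ G₂.edgeSet ∧ e₁ ∉ G₂.edgeSet ∧ e₂ ∉ G₁.edgeSet) ∨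
  (e₂ ∈ G₁.edgeSet ∧ e₁ ∈ G₂.edgeSet ∧ e₂ ∉ G₂.edgeSet ∧ e₁ ∉ G₁.edgeSet)

/-- A `k`-separation `(B₁,B₂)` of a subgraph `B` of `G`. -/
def IsSubgraphSeparation {V : Type} {G : SimpleGraph V} (B B₁ B₂ : G.Subgraph) (k : ℕ) : Prop :=
  B₁ ⊔ B₂ = B ∧ Disjoint B₁.edgeSet B₂.edgeSet ∧
  B₁.verts ≠ B.verts ∧ B₂.verts ≠ B.verts ∧ (B₁.verts ∩ B₂.verts).ncard = k

/-- The separation `(B₁,B₂)` separates the vertex sets `U₁` and `U₂`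
(each part contains precisely one of them). -/
def SeparatesSets {V : Type} {G : SimpleGraph V} (B₁ B₂ : G.Subgraph) (U₁ U₂ : Set V) : Prop :=
  (U₁ ⊆ B₁.verts ∧ U₂ ⊆ B₂.verts ∧ ¬ U₂ ⊆ B₁.verts ∧ ¬ U₁ ⊆ B₂.verts) ∨
  (U₂ ⊆ B₁.verts ∧ U₁ ⊆ B₂.verts ∧ ¬ U₁ ⊆ B₁.verts ∧ ¬ U₂ ⊆ B₂.verts)

/-- `(G,Z)` is `4`-connected: every `k`-separation with `Z` inside the first part has
`k ≥ 4`, or `k = 3` and the second part has exactly `4` vertices. -/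
def PairFourConnected {V : Type} (G : SimpleGraph V) (Z : Set V) : Prop :=
  ∀ (G₁ G₂ : G.Subgraph) (k : ℕ), IsKSeparation G G₁ G₂ k → Z ⊆ G₁.verts →
    4 ≤ k ∨ (k = 3 ∧ G₂.verts.ncard = 4)

-- ============ Bridges ============

/-- `K` is (the vertex set of) a connected component of `G` with the set `S` deleted. -/
def IsCompAway {V : Type} (G : SimpleGraph V) (S K : Set V) : Prop :=
  Disjoint K S ∧ (G.induce K).Connected ∧
  ∀ u ∈ K, ∀ v, G.Adj u v → v ∉ S → v ∈ K

/-- The subgraph of `G` induced by the edges of the component `K` together with the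
edges linking `K` to the rest of the graph. -/
def bridgeSubgraph {V : Type} (G : SimpleGraph V) (K : Set V) : G.Subgraph where
  verts := K ∪ {v | ∃ u ∈ K, G.Adj v u}
  Adj a b := G.Adj a b ∧ (a ∈ K ∨ b ∈ K)
  adj_sub h := h.1
  edge_vert := by
    rintro a b ⟨hab, ha | hb⟩
    · exact Or.inl ha
    · exact Or.inr ⟨b, hb, hab⟩
  symm := ⟨fun a b h => ⟨h.1.symm, h.2.symm⟩⟩

/-- A trivial `H`-bridge of `G`: a single edge not in `H` with both ends in `H`. -/
def IsTrivialBridgeOf {V : Type} {G : SimpleGraph V} (H B : G.Subgraph) : Prop :=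
  ∃ u v, ∃ h : G.Adj u v, u ∈ H.verts ∧ v ∈ H.verts ∧ s(u, v) ∉ H.edgeSet ∧
    B = G.subgraphOfAdj h

/-- An `H`-bridge of `G`. -/
def IsBridgeOf {V : Type} {G : SimpleGraph V} (H B : G.Subgraph) : Prop :=
  IsTrivialBridgeOf H B ∨
  ∃ K : Set V, IsCompAway G H.verts K ∧ B = bridgeSubgraph G K

/-- The feet of an `H`-bridge `B`: its vertices lying in `H`. -/
def bridgeFeet {V : Type} {G : SimpleGraph V} (H B : G.Subgraph) : Set V :=
  B.verts ∩ H.verts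

/-- `p` is a path contained in the subgraph `B`. -/
def PathIn {V : Type} {G : SimpleGraph V} (B : G.Subgraph) {a b : V} (p : G.Walk a b) : Prop :=
  p.IsPath ∧ (∀ v ∈ p.support, v ∈ B.verts) ∧ ∀ e ∈ p.edges, e ∈ B.edgeSet

/-- `B` contains two vertex-disjoint paths between `{s₁,t₁}` and `{s₂,t₂}`. -/
def TwoDisjointPathsIn {V : Type} {G : SimpleGraph V} (B : G.Subgraph) (s₁ t₁ s₂ t₂ : V) : Prop :=
  ∃ (a₁ b₁ a₂ b₂ : V) (p₁ : G.Walk a₁ b₁) (p₂ : G.Walk a₂ b₂),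
    ({a₁, a₂} : Set V) = {s₁, t₁} ∧ ({b₁, b₂} : Set V) = {s₂, t₂} ∧
    PathIn B p₁ ∧ PathIn B p₂ ∧ ∀ v ∈ p₁.support, v ∉ p₂.support

/-- The subgraph `M` formed by the edges `e₁ = s₁t₁` and `e₂ = s₂t₂` only. -/
def Msub {V : Type} (G : SimpleGraph V) {s₁ t₁ s₂ t₂ : V}
    (h₁ : G.Adj s₁ t₁) (h₂ : G.Adj s₂ t₂) : G.Subgraph :=
  G.subgraphOfAdj h₁ ⊔ G.subgraphOfAdj h₂
-- ============ Cyclic orders and plane embeddings ============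

/-- `target` occurs in this cyclic order on the cyclic list `l`
(up to rotation and reflection). -/
def InCyclicOrder {V : Type} (l target : List V) : Prop :=
  ∃ l' : List V, (List.IsRotated l l' ∨ List.IsRotated l.reverse l') ∧ target.Sublist l'

/-- The graph `H` augmented, for each index `i`, by a new apex vertex joined to all
vertices of `F i`.  Planarity of this augmented graph expresses that `H` has a planar
embedding in which each set `F i` lies on (the boundary of) a face. -/
def facesAugmented {V ι : Type} (H : SimpleGraph V) (F : ι → Set V) : SimpleGraph (V ⊕ ι) :=
  SimpleGraph.fromRel (fun a b =>
    match a, b with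
    | Sum.inl u, Sum.inl v => H.Adj u v
    | Sum.inl u, Sum.inr i => u ∈ F i
    | _, _ => False)

/-- `T` is the vertex set of a triangle of `H`. -/
def IsTriangle {V : Type} (H : SimpleGraph V) (T : Set V) : Prop :=
  ∃ x y z : V, H.Adj x y ∧ H.Adj y z ∧ H.Adj x z ∧ T = {x, y, z}

/-- The three edges of the triangle on `x, y, z`. -/
def triEdges3 {V : Type} (x y z : V) : Set (Sym2 V) := {s(x, y), s(y, z), s(x, z)}

/-- All edges spanned by the triangles in the collection `𝒯`. -/
def closureEdges {V : Type} (𝒯 : Set (Set V)) : Set (Sym2 V) :=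
  {e | ∃ T ∈ 𝒯, ∃ x ∈ T, ∃ y ∈ T, x ≠ y ∧ e = s(x, y)}

-- ============ 3-sums ============

/-- `K` is a component of `G` minus the base `H` all of whose attachments lie in `T`. -/
def AttachedComp {V : Type} (G H : SimpleGraph V) (T K : Set V) : Prop :=
  IsCompAway G H.support K ∧ ∀ u ∈ K, ∀ v, G.Adj u v → v ∈ H.support → v ∈ T

def summandVerts {V : Type} (G H : SimpleGraph V) (T : Set V) : Set V :=
  T ∪ ⋃₀ {K | AttachedComp G H T K}

/-- The summand over the triangle `T`: the relevant part of `G` with the triangle `T`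
completed. -/
def summandGraph {V : Type} (G : SimpleGraph V) (T W : Set V) : SimpleGraph V :=
  SimpleGraph.fromRel (fun a b => (G.Adj a b ∧ a ∈ W ∧ b ∈ W) ∨ (a ∈ T ∧ b ∈ T))

/-- `G` arises from the base graph `H` by `3`-summing `3`-connected graphs to the
triangles in `𝒯` (identifying triangles and deleting `0,1,2` or `3` of the identified
edges). -/
def ArisesBy3Sums {V : Type} (G H : SimpleGraph V) (𝒯 : Set (Set V)) : Prop :=
  (∀ T ∈ 𝒯, IsTriangle H T) ∧
  (∀ a b, G.Adj a b → a ∈ H.support → b ∈ H.support → H.Adj a b) ∧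
  (∀ a b, H.Adj a b → G.Adj a b ∨ ∃ T ∈ 𝒯, a ∈ T ∧ b ∈ T) ∧
  (∀ K, IsCompAway G H.support K → ∃ T ∈ 𝒯, AttachedComp G H T K) ∧
  (∀ T ∈ 𝒯, (∃ K, AttachedComp G H T K) →
    IsKConnected 3 ((summandGraph G T (summandVerts G H T)).induce (summandVerts G H T)))

-- ============ The structures (i)-(iv) ============

/-- Structure (i), with the base plane graph `H` and the triangle collection `𝒯`
exhibited:  `H` is `2`-connected and planar with the edges `s₁t₁` and `s₂t₂` on its outer
facial cycle `C`, each `T ∈ 𝒯` is a facial triangle, and `G` arises from `H` by `3`-summing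
`3`-connected graphs to the triangles in `𝒯`. -/
def StructureIWith {V : Type} (G : SimpleGraph V) (s₁ t₁ s₂ t₂ : V)
    (H : SimpleGraph V) (𝒯 : Set (Set V)) : Prop :=
  ∃ (w : V) (C : H.Walk w w),
    C.IsCycle ∧ s(s₁, t₁) ∈ C.edges ∧ s(s₂, t₂) ∈ C.edges ∧
    IsKConnected 2 (H.induce H.support) ∧
    IsPlanar (facesAugmented H (fun X : Option {T // T ∈ 𝒯} =>
      X.elim {v | v ∈ C.support} Subtype.val)) ∧
    ArisesBy3Sums G H 𝒯

def StructureI {V : Type} (G : SimpleGraph V) (s₁ t₁ s₂ t₂ : V) : Prop :=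
  ∃ H 𝒯, StructureIWith G s₁ t₁ s₂ t₂ H 𝒯

/-- Structure (i) with, in addition, `s₁, s₂, t₂, t₁` occurring on the outer facial
cycle in this (clockwise) cyclic order. -/
def StructureIOrdered {V : Type} (G : SimpleGraph V) (s₁ t₁ s₂ t₂ : V) : Prop :=
  ∃ (H : SimpleGraph V) (𝒯 : Set (Set V)) (w : V) (C : H.Walk w w),
    C.IsCycle ∧ s(s₁, t₁) ∈ C.edges ∧ s(s₂, t₂) ∈ C.edges ∧
    InCyclicOrder C.support.tail [s₁, s₂, t₂, t₁] ∧
    IsKConnected 2 (H.induce H.support) ∧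
    IsPlanar (facesAugmented H (fun X : Option {T // T ∈ 𝒯} =>
      X.elim {v | v ∈ C.support} Subtype.val)) ∧
    ArisesBy3Sums G H 𝒯

def fiveEdges {V : Type} (s₁ t₁ u₁ v₁ : V) : Set (Sym2 V) :=
  {s(s₁, t₁), s(s₁, u₁), s(s₁, v₁), s(t₁, u₁), s(t₁, v₁)}

/-- Structure (ii), with the member `base` of `𝒢₂` and the triangle collection `𝒯`
exhibited: `base` is obtained from a `2`-connected plane graph `H` with distinct vertices
`u₁, v₁, s₂, t₂` (together with the edge `s₂t₂`) on its outer facial cycle `C` by adding the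
two new vertices `s₁, t₁` and the five edges `s₁t₁, s₁u₁, s₁v₁, t₁u₁, t₁v₁`, the collection
`𝒯` consists of the triangles `s₁t₁u₁`, `s₁t₁v₁` and facial triangles of `H`, and `G` arises
from `base` by `3`-summing `3`-connected graphs to the triangles in `𝒯`. -/
def StructureIIWith {V : Type} (G : SimpleGraph V) (s₁ t₁ s₂ t₂ : V)
    (base : SimpleGraph V) (𝒯 : Set (Set V)) : Prop :=
  ∃ (H : SimpleGraph V) (u₁ v₁ : V) (𝒯H : Set (Set V)) (w : V) (C : H.Walk w w),
    C.IsCycle ∧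
    u₁ ∈ C.support ∧ v₁ ∈ C.support ∧ s₂ ∈ C.support ∧ t₂ ∈ C.support ∧
    ([u₁, v₁, s₂, t₂] : List V).Nodup ∧ s(s₂, t₂) ∈ C.edges ∧
    s₁ ∉ H.support ∧ t₁ ∉ H.support ∧ s₁ ≠ t₁ ∧
    IsKConnected 2 (H.induce H.support) ∧
    (∀ T ∈ 𝒯H, IsTriangle H T) ∧
    IsPlanar (facesAugmented H (fun X : Option {T // T ∈ 𝒯H} =>
      X.elim {v | v ∈ C.support} Subtype.val)) ∧
    base = H ⊔ SimpleGraph.fromEdgeSet (fiveEdges s₁ t₁ u₁ v₁) ∧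
    𝒯 = {({s₁, t₁, u₁} : Set V), ({s₁, t₁, v₁} : Set V)} ∪ 𝒯H ∧
    ArisesBy3Sums G base 𝒯

def StructureII {V : Type} (G : SimpleGraph V) (s₁ t₁ s₂ t₂ : V) : Prop :=
  ∃ base 𝒯, StructureIIWith G s₁ t₁ s₂ t₂ base 𝒯

def tenEdges {V : Type} (s₁ t₁ s₂ t₂ u₁ v₁ u₂ v₂ : V) : Set (Sym2 V) :=
  {s(s₁, t₁), s(s₁, u₁), s(s₁, v₁), s(t₁, u₁), s(t₁, v₁),
   s(s₂, t₂), s(s₂, u₂), s(s₂, v₂), s(t₂, u₂), s(t₂, v₂)}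

/-- Structure (iii), with the member `base` of `𝒢₃` and the triangle collection `𝒯`
exhibited: `base` is obtained from `H = K₂` on `u₁,v₁` (with `u₂ = u₁`, `v₂ = v₁`) or from a
`2`-connected plane graph `H` with `v₁, u₁, u₂, v₂` on its outer facial cycle in clockwise
order, by adding the four new vertices `s₁, t₁, s₂, t₂` and ten edges, where `uᵢ ≠ vᵢ` and
`|{u₁,v₁,u₂,v₂}| ≥ 3`, the collection `𝒯` consists of the triangles `s₁t₁u₁`, `s₁t₁v₁`,
`s₂t₂u₂`, `s₂t₂v₂` and facial triangles of `H`, and `G` arises from `base` by `3`-summing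
`3`-connected graphs to the triangles in `𝒯`. -/
def StructureIIIWith {V : Type} (G : SimpleGraph V) (s₁ t₁ s₂ t₂ : V)
    (base : SimpleGraph V) (𝒯 : Set (Set V)) : Prop :=
  ∃ (H : SimpleGraph V) (u₁ v₁ u₂ v₂ : V) (𝒯H : Set (Set V)),
    u₁ ≠ v₁ ∧ u₂ ≠ v₂ ∧ 3 ≤ ({u₁, v₁, u₂, v₂} : Set V).ncard ∧
    ([s₁, t₁, s₂, t₂] : List V).Nodup ∧
    s₁ ∉ H.support ∧ t₁ ∉ H.support ∧ s₂ ∉ H.support ∧ t₂ ∉ H.support ∧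
    u₁ ∈ H.support ∧ v₁ ∈ H.support ∧ u₂ ∈ H.support ∧ v₂ ∈ H.support ∧
    ((H = SimpleGraph.fromEdgeSet {s(u₁, v₁)} ∧ u₂ = u₁ ∧ v₂ = v₁ ∧ 𝒯H = ∅) ∨
     (∃ (w : V) (C : H.Walk w w), C.IsCycle ∧
        IsKConnected 2 (H.induce H.support) ∧
        (∀ T ∈ 𝒯H, IsTriangle H T) ∧
        InCyclicOrder C.support.tail (@List.dedup V (Classical.decEq V) [v₁, u₁, u₂, v₂]) ∧
        (∀ x, x ∈ C.support → x ∈ H.support) ∧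
        v₁ ∈ C.support ∧ u₁ ∈ C.support ∧ u₂ ∈ C.support ∧ v₂ ∈ C.support ∧
        IsPlanar (facesAugmented H (fun X : Option {T // T ∈ 𝒯H} =>
          X.elim {v | v ∈ C.support} Subtype.val)))) ∧
    base = H ⊔ SimpleGraph.fromEdgeSet (tenEdges s₁ t₁ s₂ t₂ u₁ v₁ u₂ v₂) ∧
    𝒯 = ({({s₁, t₁, u₁} : Set V), ({s₁, t₁, v₁} : Set V),
          ({s₂, t₂, u₂} : Set V), ({s₂, t₂, v₂} : Set V)} : Set (Set V)) ∪ 𝒯H ∧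
    ArisesBy3Sums G base 𝒯

def StructureIII {V : Type} (G : SimpleGraph V) (s₁ t₁ s₂ t₂ : V) : Prop :=
  ∃ base 𝒯, StructureIIIWith G s₁ t₁ s₂ t₂ base 𝒯

/-- Structure (iv): every `M`-bridge of `G` is trivial, or has exactly three feet, or has a
`1`-separation `(B₁,B₂)` whose cut vertex `x` is outside `V(M)` with `{sᵢ,tᵢ} ⊆ V(Bᵢ)`. -/
def StructureIV {V : Type} (G : SimpleGraph V) (s₁ t₁ s₂ t₂ : V) (M : G.Subgraph) : Prop :=
  ∀ B : G.Subgraph, IsBridgeOf M B →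
    IsTrivialBridgeOf M B ∨ (bridgeFeet M B).ncard = 3 ∨
    ∃ (B₁ B₂ : G.Subgraph) (x : V),
      IsSubgraphSeparation B B₁ B₂ 1 ∧ B₁.verts ∩ B₂.verts = {x} ∧
      x ∉ M.verts ∧ s₁ ∈ B₁.verts ∧ t₁ ∈ B₁.verts ∧ s₂ ∈ B₂.verts ∧ t₂ ∈ B₂.verts
-- ============ The structure theorem and minimum counterexamples ============

/-- `G` (with the specified nonadjacent edges `e₁ = s₁t₁` and `e₂ = s₂t₂`) satisfies one of
the four conclusions (i)-(iv) of the structure theorem. -/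
def SatisfiesStructure {V : Type} (G : SimpleGraph V) (s₁ t₁ s₂ t₂ : V)
    (h₁ : G.Adj s₁ t₁) (h₂ : G.Adj s₂ t₂) : Prop :=
  StructureI G s₁ t₁ s₂ t₂ ∨ StructureII G s₁ t₁ s₂ t₂ ∨ StructureII G s₂ t₂ s₁ t₁ ∨
  StructureIII G s₁ t₁ s₂ t₂ ∨
  StructureIV G s₁ t₁ s₂ t₂ (Msub G h₁ h₂)

/-- A counterexample to the structure theorem: a graph with two specified nonadjacent
edges `e₁ = s₁t₁`, `e₂ = s₂t₂`, which is `2`-connected, all of whose `2`-separations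
separate `e₁` from `e₂`, which is `K₄*`-free, and which satisfies none of the conclusions
(i)-(iv). -/
def IsCounterexample {V : Type} (G : SimpleGraph V) (s₁ t₁ s₂ t₂ : V) : Prop :=
  ∃ (h₁ : G.Adj s₁ t₁) (h₂ : G.Adj s₂ t₂),
    ([s₁, t₁, s₂, t₂] : List V).Nodup ∧
    IsKConnected 2 G ∧
    (∀ G₁ G₂ : G.Subgraph, IsKSeparation G G₁ G₂ 2 →
      SeparatesEdgePair G₁ G₂ s(s₁, t₁) s(s₂, t₂)) ∧
    ¬ HasK4starMinor G s₁ t₁ s₂ t₂ ∧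
    ¬ SatisfiesStructure G s₁ t₁ s₂ t₂ h₁ h₂

/-- A minimum counterexample: a counterexample with the minimum number of edges among
all (finite) counterexamples. -/
def IsMinCounterexample {V : Type} (G : SimpleGraph V) (s₁ t₁ s₂ t₂ : V) : Prop :=
  IsCounterexample G s₁ t₁ s₂ t₂ ∧
  ∀ (W : Type) (_ : Finite W) (G' : SimpleGraph W) (a₁ b₁ a₂ b₂ : W),
    IsCounterexample G' a₁ b₁ a₂ b₂ → G.edgeSet.ncard ≤ G'.edgeSet.ncard

-- ============ Cuts and bicuts ============

/-- `K` is an `(S,T)`-cut: a set of edges of `G` meeting every path from `S` to `T`. -/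
def IsSTCut {V : Type} (G : SimpleGraph V) (S T : Set V) (K : Set (Sym2 V)) : Prop :=
  K ⊆ G.edgeSet ∧
  ∀ (u v : V), u ∈ S → v ∈ T → ∀ p : G.Walk u v, p.IsPath → ∃ e ∈ p.edges, e ∈ K

/-- The capacity of a set of edges. -/
noncomputable def cutCap {V : Type} (c : Sym2 V → ℕ) (K : Set (Sym2 V)) : ℕ :=
  ∑ᶠ e ∈ K, c e

/-- `K` is an `(s₁,t₁;s₂,t₂)`-bicut: a set of edges of `G` meeting every `s₁`-`t₁` path
and every `s₂`-`t₂` path. -/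
def IsBicut {V : Type} (G : SimpleGraph V) (s₁ t₁ s₂ t₂ : V) (K : Set (Sym2 V)) : Prop :=
  K ⊆ G.edgeSet ∧
  (∀ p : G.Walk s₁ t₁, p.IsPath → ∃ e ∈ p.edges, e ∈ K) ∧
  (∀ p : G.Walk s₂ t₂, p.IsPath → ∃ e ∈ p.edges, e ∈ K)

-- ============ Flows in the arc-vertex form ============

/-- The divergence (net outflow) of `f` at `v`. -/
noncomputable def divg {V : Type} [Fintype V] (f : V → V → ℝ) (v : V) : ℝ :=
  (∑ w, f v w) - (∑ w, f w v)

/-- An `(S,T)`-flow in the network `(G,c)`, in the arc-vertex form, on the digraph `D`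
obtained from `G` by replacing each edge by a pair of opposite arcs. -/
def IsArcFlow {V : Type} [Fintype V] (G : SimpleGraph V) (c : Sym2 V → ℕ)
    (S T : Set V) (f : V → V → ℝ) : Prop :=
  (∀ u v, 0 ≤ f u v) ∧
  (∀ u v, ¬ G.Adj u v → f u v = 0) ∧
  (∀ u v, G.Adj u v → f u v + f v u ≤ (c s(u, v) : ℝ)) ∧
  (∀ v, v ∉ S → v ∉ T → divg f v = 0) ∧
  (∀ v ∈ S, 0 ≤ divg f v) ∧
  (∀ v ∈ T, divg f v ≤ 0)

/-- The value of an `(S,T)`-flow. -/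
noncomputable def flowVal {V : Type} [Fintype V] (S : Set V) (f : V → V → ℝ) : ℝ :=
  ∑ᶠ v ∈ S, divg f v

def IsIntegralArc {V : Type} (f : V → V → ℝ) : Prop := ∀ u v, ∃ n : ℤ, f u v = n

/-- An `(s₁,t₁;s₂,t₂)`-biflow in the arc-vertex form: an `s₁`-`t₁` flow and an `s₂`-`t₂`
flow jointly respecting the capacities. -/
def IsArcBiflow {V : Type} [Fintype V] (G : SimpleGraph V) (c : Sym2 V → ℕ)
    (s₁ t₁ s₂ t₂ : V) (f₁ f₂ : V → V → ℝ) : Prop :=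
  IsArcFlow G c {s₁} {t₁} f₁ ∧ IsArcFlow G c {s₂} {t₂} f₂ ∧
  ∀ u v, G.Adj u v → f₁ u v + f₁ v u + f₂ u v + f₂ v u ≤ (c s(u, v) : ℝ)

-- ============ Biflows in the path-packing form ============

/-- The set `𝒫` of simple paths from `s₁` to `t₁` or from `s₂` to `t₂`. -/
def BPath {V : Type} (G : SimpleGraph V) (s₁ t₁ s₂ t₂ : V) : Type :=
  {p : G.Walk s₁ t₁ // p.IsPath} ⊕ {p : G.Walk s₂ t₂ // p.IsPath}

def bpEdges {V : Type} {G : SimpleGraph V} {s₁ t₁ s₂ t₂ : V}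
    (Q : BPath G s₁ t₁ s₂ t₂) : List (Sym2 V) :=
  Q.elim (fun p => p.1.edges) (fun p => p.1.edges)

/-- A biflow: a nonnegative assignment on `𝒫` respecting the capacity of each edge. -/
def IsBiflow {V : Type} (G : SimpleGraph V) (c : Sym2 V → ℕ) (s₁ t₁ s₂ t₂ : V)
    (f : BPath G s₁ t₁ s₂ t₂ → ℝ) : Prop :=
  (∀ Q, 0 ≤ f Q) ∧
  ∀ e ∈ G.edgeSet, (∑ᶠ Q ∈ {Q | e ∈ bpEdges Q}, f Q) ≤ (c e : ℝ)

/-- The value of a biflow. -/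
noncomputable def biflowVal {V : Type} {G : SimpleGraph V} {s₁ t₁ s₂ t₂ : V}
    (f : BPath G s₁ t₁ s₂ t₂ → ℝ) : ℝ :=
  ∑ᶠ Q, f Q

def IsIntegralBiflow {V : Type} {G : SimpleGraph V} {s₁ t₁ s₂ t₂ : V}
    (f : BPath G s₁ t₁ s₂ t₂ → ℝ) : Prop :=
  ∀ Q, ∃ n : ℤ, f Q = n

/-- The maximum value of an integral biflow equals the minimum capacity of a bicut. -/
def MaxBiflowEqMinBicut {V : Type} (G : SimpleGraph V) (c : Sym2 V → ℕ)
    (s₁ t₁ s₂ t₂ : V) : Prop :=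
  ∃ r : ℝ,
    IsGreatest {x | ∃ f : BPath G s₁ t₁ s₂ t₂ → ℝ,
      IsBiflow G c s₁ t₁ s₂ t₂ f ∧ IsIntegralBiflow f ∧ biflowVal f = x} r ∧
    IsLeast {x | ∃ K : Set (Sym2 V),
      IsBicut G s₁ t₁ s₂ t₂ K ∧ (cutCap c K : ℝ) = x} r

-- ============ Circlets ============

/-- The cyclic successor on `Fin n`. -/
def cnext {n : ℕ} (hn : 0 < n) (i : Fin n) : Fin n := ⟨((i : ℕ) + 1) % n, Nat.mod_lt _ hn⟩

/-- A circlet of `G`: a cyclically ordered set of at least four distinct vertices together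
with a set of edges of `G` of the form `vᵢvᵢ₊₁`. -/
structure Circlet {V : Type} (G : SimpleGraph V) where
  n : ℕ
  hn : 4 ≤ n
  vtx : Fin n → V
  inj : Function.Injective vtx
  edges : Set (Sym2 V)
  edges_sub : edges ⊆ G.edgeSet
  edges_form : ∀ e ∈ edges, ∃ i : Fin n, e = s(vtx i, vtx (cnext (by omega) i))

/-- `C` is an `Ω`-cycle: a cycle containing `V(Ω)` and `E(Ω)`, with the cyclic ordering of
`V(Ω)` agreeing with its ordering on `C`. -/
def IsOmegaCycle {V : Type} {G : SimpleGraph V} (Ω : Circlet G) {w : V}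
    (C : G.Walk w w) : Prop :=
  C.IsCycle ∧ (∀ i, Ω.vtx i ∈ C.support) ∧ (∀ e ∈ Ω.edges, e ∈ C.edges) ∧
  InCyclicOrder C.support.tail (List.ofFn Ω.vtx)

/-- A `C`-path: a path meeting the cycle `C` exactly in its two distinct ends and using no
edge of `C`. -/
def IsCPath {V : Type} {G : SimpleGraph V} {w : V} (C : G.Walk w w) {a b : V}
    (P : G.Walk a b) : Prop :=
  P.IsPath ∧ a ≠ b ∧ a ∈ C.support ∧ b ∈ C.support ∧
  (∀ e ∈ P.edges, e ∉ C.edges) ∧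
  ∀ v ∈ P.support, v ∈ C.support → v = a ∨ v = b

/-- `(P₁,P₂)` is a cross of `C`: vertex-disjoint `C`-paths whose ends interleave on `C`. -/
def IsCross {V : Type} {G : SimpleGraph V} {w : V} (C : G.Walk w w) {a₁ b₁ a₂ b₂ : V}
    (P₁ : G.Walk a₁ b₁) (P₂ : G.Walk a₂ b₂) : Prop :=
  IsCPath C P₁ ∧ IsCPath C P₂ ∧ (∀ v ∈ P₁.support, v ∉ P₂.support) ∧
  InCyclicOrder C.support.tail [a₁, a₂, b₁, b₂]

/-- `A` is the vertex set of the segment of `C` from `a` to `b` avoiding `avoid`. -/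
def IsSegment {V : Type} {G : SimpleGraph V} {w : V} (C : G.Walk w w)
    (a b avoid : V) (A : Set V) : Prop :=
  ∃ p : G.Walk a b, p.IsPath ∧ (∀ e ∈ p.edges, e ∈ C.edges) ∧ avoid ∉ p.support ∧
    A = {v | v ∈ p.support}

namespace TriComp
variable {V : Type}

def Rel (G : SimpleGraph V) (S : Set V) (u v : V) : Prop :=
  Relation.ReflTransGen (fun p q => G.Adj p q ∧ p ∈ S ∧ q ∈ S) u v

lemma Rel.symm {G : SimpleGraph V} {S : Set V} {u v : V} (h : Rel G S u v) : Rel G S v u := by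
  refine (@Relation.ReflTransGen.symmetric _ _ ⟨?_⟩).symm _ _ h
  rintro a b ⟨h1, h2, h3⟩; exact ⟨h1.symm, h3, h2⟩

lemma Rel.mono {G G' : SimpleGraph V} {S S' : Set V} (hG : G ≤ G') (hS : S ⊆ S')
    {u v : V} (h : Rel G S u v) : Rel G' S' u v := by
  refine Relation.ReflTransGen.mono ?_ _ _ h
  rintro a b ⟨h1, h2, h3⟩; exact ⟨hG h1, hS h2, hS h3⟩

lemma rel_bind {G : SimpleGraph V} {S : Set V} {P : V → V → Prop} {u v : V}
    (h : ∀ a b, P a b → Rel G S a b) (hP : Relation.ReflTransGen P u v) : Rel G S u v := by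
  induction hP with
  | refl => exact Relation.ReflTransGen.refl
  | tail _ hstep ih => exact ih.trans (h _ _ hstep)



lemma rel_closed {P : V → V → Prop} {A : Set V} (hA : ∀ p q, p ∈ A → P p q → q ∈ A)
    {u v : V} (h : Relation.ReflTransGen P u v) (hu : u ∈ A) : v ∈ A := by
  induction h with
  | refl => exact hu
  | tail _ hstep ih => exact hA _ _ ih hstep

lemma rel_of_walk {G : SimpleGraph V} {S : Set V} {a b : ↥S}
    (p : (G.induce S).Walk a b) : Rel G S a b := by
  induction p with
  | nil => exact Relation.ReflTransGen.refl
  | cons h q ih =>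
    exact Relation.ReflTransGen.head ⟨h, Subtype.mem _, Subtype.mem _⟩ ih

lemma rel_of_connected {G : SimpleGraph V} {S : Set V} (h : (G.induce S).Connected)
    {u v : V} (hu : u ∈ S) (hv : v ∈ S) : Rel G S u v := by
  obtain ⟨w⟩ := h.preconnected ⟨u, hu⟩ ⟨v, hv⟩
  exact rel_of_walk w

lemma reachable_of_rel {G : SimpleGraph V} {S : Set V} {u v : V} (h : Rel G S u v) :
    ∀ (hu : u ∈ S) (hv : v ∈ S), (G.induce S).Reachable ⟨u, hu⟩ ⟨v, hv⟩ := by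
  induction h with
  | refl => exact fun hu hv => Reachable.refl _
  | @tail b c _ hstep ih =>
    intro hu hv
    exact (ih hu hstep.2.1).trans (SimpleGraph.Adj.reachable (by exact hstep.1))

lemma connected_of_rel {G : SimpleGraph V} {S : Set V} (hne : S.Nonempty)
    (h : ∀ u ∈ S, ∀ v ∈ S, Rel G S u v) : (G.induce S).Connected := by
  rw [SimpleGraph.connected_iff]
  refine ⟨fun a b => ?_, ⟨⟨hne.choose, hne.choose_spec⟩⟩⟩
  obtain ⟨u, hu⟩ := a; obtain ⟨v, hv⟩ := b
  exact reachable_of_rel (h u hu v hv) hu hv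

lemma rel_comp {G : SimpleGraph V} {A : Set V} {c u : V} (h : Rel G A u c) :
    Rel G {v | v ∈ A ∧ Rel G A v c} u c := by
  induction h using Relation.ReflTransGen.head_induction_on with
  | refl => exact Relation.ReflTransGen.refl
  | @head p q hstep htail ih =>
    refine Relation.ReflTransGen.head ⟨hstep.1, ⟨hstep.2.1, ?_⟩, ⟨hstep.2.2, htail⟩⟩ ih
    exact Relation.ReflTransGen.head hstep htail

section Abstract

variable {G Gp : SimpleGraph V} {T V₁ V₂ : Set V} {B : Fin 4 → Set V} {r : Fin 4 → V}

lemma small (hEdge : ∀ a b, Gp.Adj a b → G.Adj a b ∨ (a ∈ T ∧ b ∈ T ∧ a ≠ b))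
    (hW : ∀ a b, G.Adj a b → a ∉ V₂ → a ∈ V₁ ∧ b ∈ V₁)
    (hT1 : T ⊆ V₁) (hT2 : T ⊆ V₂)
    {D : Set V} {t : V} (hD : ∀ a ∈ D, a ∈ V₁ → a ∈ V₂ → a = t) {u v : V}
    (h : Rel Gp D u v) (hv : v ∈ V₂) :
    (u ∈ V₂ → Rel G (D ∩ V₂) u v) ∧
      (u ∉ V₂ → t ∈ D ∧ Rel G ((D \ V₂) ∪ {t}) u t ∧ Rel G (D ∩ V₂) t v) := by
  induction h using Relation.ReflTransGen.head_induction_on with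
  | refl => exact ⟨fun _ => Relation.ReflTransGen.refl, fun hu => absurd hv hu⟩
  | @head p q hstep htail ih =>
    obtain ⟨hadj, hpD, hqD⟩ := hstep
    have real : G.Adj p q := by
      rcases hEdge _ _ hadj with h' | ⟨hpT, hqT, hne⟩
      · exact h'
      · exact absurd ((hD p hpD (hT1 hpT) (hT2 hpT)).trans
          (hD q hqD (hT1 hqT) (hT2 hqT)).symm) hne
    by_cases hp : p ∈ V₂ <;> by_cases hq : q ∈ V₂
    · exact ⟨fun _ => Relation.ReflTransGen.head ⟨real, ⟨hpD, hp⟩, ⟨hqD, hq⟩⟩ (ih.1 hq),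
        fun hnp => absurd hp hnp⟩
    · have hpt : p = t := hD p hpD (hW q p real.symm hq).2 hp
      obtain ⟨htD, _, reltv⟩ := ih.2 hq
      exact ⟨fun _ => hpt ▸ reltv, fun hnp => absurd hp hnp⟩
    · have hqt : q = t := hD q hqD (hW p q real hp).2 hq
      refine ⟨fun hp' => absurd hp' hp, fun _ => ⟨hqt ▸ hqD, ?_, hqt ▸ ih.1 hq⟩⟩
      exact Relation.ReflTransGen.single ⟨hqt ▸ real, Or.inl ⟨hpD, hp⟩, Or.inr rfl⟩
    · obtain ⟨htD, relpt, reltv⟩ := ih.2 hq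
      refine ⟨fun hp' => absurd hp' hp, fun _ => ⟨htD, ?_, reltv⟩⟩
      exact Relation.ReflTransGen.head ⟨real, Or.inl ⟨hpD, hp⟩, Or.inl ⟨hqD, hq⟩⟩ relpt

lemma noW (hEdge : ∀ a b, Gp.Adj a b → G.Adj a b ∨ (a ∈ T ∧ b ∈ T ∧ a ≠ b))
    (hW : ∀ a b, G.Adj a b → a ∉ V₂ → a ∈ V₁ ∧ b ∈ V₁)
    (hTV : ∀ a, a ∈ V₁ → a ∈ V₂ → a ∈ T) (hT1 : T ⊆ V₁) (hT2 : T ⊆ V₂)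
    {D : Set V} (hTD : ∀ a ∈ T, a ∉ D) {j : V} (hj : j ∉ D)
    {u v : V} (h : Rel Gp D u v) (hv : v ∈ V₂) : u ∈ V₂ := by
  by_contra hu
  have hD : ∀ a ∈ D, a ∈ V₁ → a ∈ V₂ → a = j :=
    fun a haD h1 h2 => absurd haD (hTD a (hTV a h1 h2))
  exact hj ((small hEdge hW hT1 hT2 hD h hv).2 hu).1

lemma big {D S : Set V}
    (hEdge : ∀ a b, Gp.Adj a b → G.Adj a b ∨ (a ∈ T ∧ b ∈ T ∧ a ≠ b)) (hDS : D ⊆ S)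
    (hfix : ∀ a b, a ∈ D → b ∈ D → a ∈ T → b ∈ T → a ≠ b → Rel G S a b)
    {u v : V} (h : Rel Gp D u v) : Rel G S u v := by
  refine rel_bind (fun a b hab => ?_) h
  rcases hEdge a b hab.1 with real | ⟨ha, hb, hne⟩
  · exact Relation.ReflTransGen.single ⟨real, hDS hab.2.1, hDS hab.2.2⟩
  · exact hfix a b hab.2.1 hab.2.2 ha hb hne

/-- Everything we need about the ambient graphs and the original branch decomposition. -/
structure Setup (G Gp : SimpleGraph V) (T V₁ V₂ : Set V)
    (B : Fin 4 → Set V) (r : Fin 4 → V) : Prop where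
  hEdge : ∀ a b, Gp.Adj a b → G.Adj a b ∨ (a ∈ T ∧ b ∈ T ∧ a ≠ b)
  hW : ∀ a b, G.Adj a b → a ∉ V₂ → a ∈ V₁ ∧ b ∈ V₁
  hTV : ∀ a, a ∈ V₁ → a ∈ V₂ → a ∈ T
  hT1 : T ⊆ V₁
  hT2 : T ⊆ V₂
  hroot : ∀ i, r i ∈ B i
  hrV : ∀ i, r i ∈ V₂
  hBrel : ∀ i, ∀ u ∈ B i, ∀ v ∈ B i, Rel Gp (B i) u v
  hdisj : ∀ i j, i ≠ j → ∀ v, v ∈ B i → v ∉ B j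
  hadj : ∀ i j, i ≠ j → ∃ p ∈ B i, ∃ q ∈ B j, Gp.Adj p q

/-- The target: data for a rooted `K₄` minor of `G`. -/
def Good (G : SimpleGraph V) (B' : Fin 4 → Set V) (r : Fin 4 → V) : Prop :=
  (∀ i, r i ∈ B' i) ∧ (∀ i, ∀ u ∈ B' i, ∀ v ∈ B' i, Rel G (B' i) u v) ∧
  (∀ i j, i ≠ j → ∀ v, v ∈ B' i → v ∉ B' j) ∧
  (∀ i j, i ≠ j → ∃ p ∈ B' i, ∃ q ∈ B' j, G.Adj p q)

lemma fin4_exists_ne (j : Fin 4) : ∃ i : Fin 4, i ≠ j := by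
  by_cases h : j = 0
  · exact ⟨1, by simp [h]⟩
  · exact ⟨0, fun h' => h h'.symm⟩

lemma Setup.noWB (St : Setup G Gp T V₁ V₂ B r) {j : Fin 4} (hTj : ∀ t ∈ T, t ∉ B j)
    {u : V} (hu : u ∈ B j) : u ∈ V₂ := by
  obtain ⟨i, hij⟩ := fin4_exists_ne j
  exact noW St.hEdge St.hW St.hTV St.hT1 St.hT2 hTj (St.hdisj i j hij _ (St.hroot i))
    (St.hBrel j u hu (r j) (St.hroot j)) (St.hrV j)

lemma Setup.adjw (St : Setup G Gp T V₁ V₂ B r) {i j : Fin 4} (hij : i ≠ j)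
    (hTj : ∀ t ∈ T, t ∉ B j) :
    ∃ p, (p ∈ B i ∧ p ∈ V₂) ∧ ∃ q, (q ∈ B j ∧ q ∈ V₂) ∧ G.Adj p q := by
  obtain ⟨p, hp, q, hq, hpq⟩ := St.hadj i j hij
  rcases St.hEdge _ _ hpq with real | ⟨hpT, hqT, _⟩
  · have hqV : q ∈ V₂ := St.noWB hTj hq
    have hpV : p ∈ V₂ := by
      by_contra hp2
      exact hTj q (St.hTV q (St.hW p q real hp2).2 hqV) hq
    exact ⟨p, ⟨hp, hpV⟩, q, ⟨hq, hqV⟩, real⟩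
  · exact absurd hq (hTj q hqT)

/-- Case: no triangle vertex belongs to any branch set. -/
lemma case0 (St : Setup G Gp T V₁ V₂ B r) (hnone : ∀ t ∈ T, ∀ k, t ∉ B k) :
    Good G B r := by
  refine ⟨St.hroot, ?_, St.hdisj, ?_⟩
  · intro k u hu v hv
    exact big St.hEdge subset_rfl
      (fun a b haB _ haT _ _ => absurd haB (hnone a haT k)) (St.hBrel k u hu v hv)
  · intro i j hij
    obtain ⟨p, ⟨hp, _⟩, q, ⟨hq, _⟩, hpq⟩ := St.adjw hij (fun t ht => hnone t ht j)
    exact ⟨p, hp, q, hq, hpq⟩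

/-- Case: all triangle vertices that are in branch sets are in the single branch `i₀`. -/
lemma case1 (St : Setup G Gp T V₁ V₂ B r) {i₀ : Fin 4} {t₀ : V}
    (ht₀T : t₀ ∈ T) (ht₀B : t₀ ∈ B i₀)
    (hOWN : ∀ t ∈ T, ∀ k, t ∈ B k → k = i₀)
    (hV₁rel : ∀ u ∈ V₁, ∀ v ∈ V₁, Rel G V₁ u v) :
    Good G (fun k => if k = i₀ then B i₀ ∪ V₁ else B k) r := by
  have hTk : ∀ k, k ≠ i₀ → ∀ t ∈ T, t ∉ B k :=
    fun k hk t ht htB => hk (hOWN t ht k htB)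
  refine ⟨?_, ?_, ?_, ?_⟩
  · intro k
    by_cases hk : k = i₀
    · subst hk; simp only [if_pos rfl]; exact Or.inl (St.hroot k)
    · simp only [if_neg hk]; exact St.hroot k
  · intro k u hu v hv
    by_cases hk : k = i₀
    · subst hk
      simp only [if_pos rfl] at hu hv ⊢
      have hfix : ∀ a b, a ∈ B k → b ∈ B k → a ∈ T → b ∈ T → a ≠ b →
          Rel G (B k ∪ V₁) a b := fun a b _ _ haT hbT _ =>
        (hV₁rel a (St.hT1 haT) b (St.hT1 hbT)).mono le_rfl Set.subset_union_right
      have hto : ∀ w ∈ B k ∪ V₁, Rel G (B k ∪ V₁) w t₀ := by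
        rintro w (hw | hw)
        · exact big St.hEdge Set.subset_union_left hfix (St.hBrel k w hw t₀ ht₀B)
        · exact (hV₁rel w hw t₀ (St.hT1 ht₀T)).mono le_rfl Set.subset_union_right
      exact (hto u hu).trans (hto v hv).symm
    · simp only [if_neg hk] at hu hv ⊢
      exact big St.hEdge subset_rfl
        (fun a b haB _ haT _ _ => absurd (hOWN a haT k haB) hk) (St.hBrel k u hu v hv)
  · intro k l hkl v hv1 hv2
    by_cases hk : k = i₀ <;> by_cases hl : l = i₀
    · exact hkl (hk.trans hl.symm)
    · subst hk
      simp only [if_pos rfl] at hv1; simp only [if_neg hl] at hv2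
      rcases hv1 with hv1 | hv1
      · exact St.hdisj k l hkl v hv1 hv2
      · have hvV₂ : v ∈ V₂ := St.noWB (hTk l hl) hv2
        exact hl (hOWN v (St.hTV v hv1 hvV₂) l hv2)
    · subst hl
      simp only [if_neg hk] at hv1; simp only [if_pos rfl] at hv2
      rcases hv2 with hv2 | hv2
      · exact St.hdisj k l hkl v hv1 hv2
      · have hvV₂ : v ∈ V₂ := St.noWB (hTk k hk) hv1
        exact hk (hOWN v (St.hTV v hv2 hvV₂) k hv1)
    · simp only [if_neg hk] at hv1; simp only [if_neg hl] at hv2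
      exact St.hdisj k l hkl v hv1 hv2
  · intro k l hkl
    by_cases hk : k = i₀ <;> by_cases hl : l = i₀
    · exact absurd (hk.trans hl.symm) hkl
    · obtain ⟨p, ⟨hp, _⟩, q, ⟨hq, _⟩, hpq⟩ := St.adjw hkl (hTk l hl)
      refine ⟨p, ?_, q, ?_, hpq⟩
      · subst hk; simp only [if_pos rfl]; exact Or.inl hp
      · simp only [if_neg hl]; exact hq
    · obtain ⟨p, ⟨hp, _⟩, q, ⟨hq, _⟩, hpq⟩ := St.adjw (Ne.symm hkl) (hTk k hk)
      refine ⟨q, ?_, p, ?_, hpq.symm⟩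
      · simp only [if_neg hk]; exact hq
      · subst hl; simp only [if_pos rfl]; exact Or.inl hp
    · obtain ⟨p, ⟨hp, _⟩, q, ⟨hq, _⟩, hpq⟩ := St.adjw hkl (hTk l hl)
      refine ⟨p, ?_, q, ?_, hpq⟩
      · simp only [if_neg hk]; exact hp
      · simp only [if_neg hl]; exact hq

/-- Case: the triangle vertices lying in branch sets are distributed over exactly two
branches `i`, `j`, with `j` owning only `c`. -/
lemma case23 (St : Setup G Gp T V₁ V₂ B r) {i j : Fin 4} (hij : i ≠ j) {a c : V}
    (haT : a ∈ T) (hcT : c ∈ T) (hac : a ≠ c)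
    (haB : a ∈ B i) (hcB : c ∈ B j)
    (hOWN : ∀ t ∈ T, ∀ k, t ∈ B k → (k = i ∧ t ≠ c) ∨ (k = j ∧ t = c))
    (hCrel : ∀ u ∈ V₁ \ {c}, ∀ v ∈ V₁ \ {c}, Rel G (V₁ \ {c}) u v)
    (hnbr : ∃ u, G.Adj c u ∧ u ∈ V₁ ∧ u ≠ c) :
    Good G (fun k => if k = i then B i ∪ (V₁ \ {c}) else if k = j then B j ∩ V₂ else B k)
      r := by
  set F : Fin 4 → Set V :=
    fun k => if k = i then B i ∪ (V₁ \ {c}) else if k = j then B j ∩ V₂ else B k with hF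
  have hFi : F i = B i ∪ (V₁ \ {c}) := if_pos rfl
  have hFj : F j = B j ∩ V₂ := by rw [hF]; simp only [if_neg (Ne.symm hij), if_pos]
  have hFk : ∀ k, k ≠ i → k ≠ j → F k = B k := by
    intro k h1 h2; rw [hF]; simp only [if_neg h1, if_neg h2]
  have hTk : ∀ k, k ≠ i → k ≠ j → ∀ t ∈ T, t ∉ B k := by
    intro k hki hkj t ht htB
    rcases hOWN t ht k htB with ⟨h', _⟩ | ⟨h', _⟩
    exacts [hki h', hkj h']
  have hBjc : ∀ t ∈ T, t ∈ B j → t = c := by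
    intro t ht htB
    rcases hOWN t ht j htB with ⟨h', _⟩ | ⟨_, h'⟩
    exacts [absurd h'.symm hij, h']
  have hBiC : ∀ t ∈ T, t ∈ B i → t ∈ V₁ \ {c} := by
    intro t ht htB
    rcases hOWN t ht i htB with ⟨_, h'⟩ | ⟨h', _⟩
    exacts [⟨St.hT1 ht, h'⟩, absurd h' hij]
  have haC : a ∈ V₁ \ {c} := ⟨St.hT1 haT, hac⟩
  have hDj : ∀ a' ∈ B j, a' ∈ V₁ → a' ∈ V₂ → a' = c :=
    fun a' ha' h1 h2 => hBjc a' (St.hTV a' h1 h2) ha'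
  have hconnI : ∀ u ∈ F i, ∀ v ∈ F i, Rel G (F i) u v := by
    rw [hFi]
    intro u hu v hv
    have hfix : ∀ a' b', a' ∈ B i → b' ∈ B i → a' ∈ T → b' ∈ T → a' ≠ b' →
        Rel G (B i ∪ (V₁ \ {c})) a' b' := fun a' b' haB' hbB' haT' hbT' _ =>
      (hCrel a' (hBiC a' haT' haB') b' (hBiC b' hbT' hbB')).mono le_rfl
        Set.subset_union_right
    have hto : ∀ w ∈ B i ∪ (V₁ \ {c}), Rel G (B i ∪ (V₁ \ {c})) w a := by
      rintro w (hw | hw)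
      · exact big St.hEdge Set.subset_union_left hfix (St.hBrel i w hw a haB)
      · exact (hCrel w hw a haC).mono le_rfl Set.subset_union_right
    exact (hto u hu).trans (hto v hv).symm
  refine ⟨?_, ?_, ?_, ?_⟩
  · intro k
    by_cases hk : k = i
    · rw [hk, hFi]; exact Or.inl (St.hroot i)
    · by_cases hk' : k = j
      · rw [hk', hFj]; exact ⟨St.hroot j, St.hrV j⟩
      · rw [hFk k hk hk']; exact St.hroot k
  · intro k u hu v hv
    by_cases hk : k = i
    · rw [hk] at hu hv ⊢; exact hconnI u hu v hv
    · by_cases hk' : k = j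
      · rw [hk', hFj] at hu hv ⊢
        exact (small St.hEdge St.hW St.hT1 St.hT2 hDj
          (St.hBrel j u hu.1 v hv.1) hv.2).1 hu.2
      · rw [hFk k hk hk'] at hu hv ⊢
        exact big St.hEdge subset_rfl
          (fun a' b' haB' _ haT' _ _ => absurd haB' (hTk k hk hk' a' haT'))
          (St.hBrel k u hu v hv)
  · -- disjointness
    have hIJ : ∀ v, v ∈ B i ∪ (V₁ \ {c}) → v ∈ B j ∩ V₂ → False := by
      rintro v (hv1 | hv1) hv2
      · exact St.hdisj i j hij v hv1 hv2.1
      · exact hv1.2 (hBjc v (St.hTV v hv1.1 hv2.2) hv2.1)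
    have hIK : ∀ k, k ≠ i → k ≠ j → ∀ v, v ∈ B i ∪ (V₁ \ {c}) → v ∈ B k → False := by
      rintro k hki hkj v (hv1 | hv1) hv2
      · exact St.hdisj i k (fun h => hki h.symm) v hv1 hv2
      · have hvV₂ : v ∈ V₂ := St.noWB (hTk k hki hkj) hv2
        exact hTk k hki hkj v (St.hTV v hv1.1 hvV₂) hv2
    intro k l hkl v hv1 hv2
    by_cases hk : k = i
    · rw [hk, hFi] at hv1
      by_cases hl : l = j
      · rw [hl, hFj] at hv2; exact hIJ v hv1 hv2
      · have hli : l ≠ i := fun h => hkl (hk.trans h.symm)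
        rw [hFk l hli hl] at hv2
        exact hIK l hli hl v hv1 hv2
    · by_cases hl : l = i
      · rw [hl, hFi] at hv2
        by_cases hk' : k = j
        · rw [hk', hFj] at hv1; exact hIJ v hv2 hv1
        · rw [hFk k hk hk'] at hv1; exact hIK k hk hk' v hv2 hv1
      · by_cases hk' : k = j
        · rw [hk', hFj] at hv1
          have hlj : l ≠ j := fun h => hkl (hk'.trans h.symm)
          rw [hFk l hl hlj] at hv2
          exact St.hdisj j l (Ne.symm hlj) v hv1.1 hv2
        · rw [hFk k hk hk'] at hv1
          by_cases hl' : l = j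
          · rw [hl', hFj] at hv2
            exact St.hdisj k j (fun h => (hl' ▸ hkl) h) v hv1 hv2.1
          · rw [hFk l hl hl'] at hv2
            exact St.hdisj k l hkl v hv1 hv2
  · -- adjacency
    have hAIJ : ∃ p ∈ F i, ∃ q ∈ F j, G.Adj p q := by
      obtain ⟨u, hcu, huV₁, huc⟩ := hnbr
      refine ⟨u, ?_, c, ?_, hcu.symm⟩
      · rw [hFi]; exact Or.inr ⟨huV₁, huc⟩
      · rw [hFj]; exact ⟨hcB, St.hT2 hcT⟩
    have hAIK : ∀ k, k ≠ i → k ≠ j → ∃ p ∈ F i, ∃ q ∈ F k, G.Adj p q := by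
      intro k hki hkj
      obtain ⟨p, ⟨hp, _⟩, q, ⟨hq, _⟩, hpq⟩ :=
        St.adjw (fun h => hki h.symm : i ≠ k) (hTk k hki hkj)
      refine ⟨p, ?_, q, ?_, hpq⟩
      · rw [hFi]; exact Or.inl hp
      · rw [hFk k hki hkj]; exact hq
    have hAJK : ∀ k, k ≠ i → k ≠ j → ∃ p ∈ F j, ∃ q ∈ F k, G.Adj p q := by
      intro k hki hkj
      obtain ⟨p, ⟨hp, hpV⟩, q, ⟨hq, _⟩, hpq⟩ :=
        St.adjw (fun h => hkj h.symm : j ≠ k) (hTk k hki hkj)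
      refine ⟨p, ?_, q, ?_, hpq⟩
      · rw [hFj]; exact ⟨hp, hpV⟩
      · rw [hFk k hki hkj]; exact hq
    have hswap : ∀ k l, (∃ p ∈ F k, ∃ q ∈ F l, G.Adj p q) →
        ∃ p ∈ F l, ∃ q ∈ F k, G.Adj p q := by
      rintro k l ⟨p, hp, q, hq, hpq⟩; exact ⟨q, hq, p, hp, hpq.symm⟩
    intro k l hkl
    by_cases hk : k = i
    · subst hk
      by_cases hl : l = j
      · exact hl ▸ hAIJ
      · exact hAIK l (Ne.symm hkl) hl
    · by_cases hl : l = i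
      · subst hl
        by_cases hk' : k = j
        · exact hswap _ _ (hk' ▸ hAIJ)
        · exact hswap _ _ (hAIK k hk hk')
      · by_cases hk' : k = j
        · subst hk'
          exact hAJK l hl (Ne.symm hkl)
        · by_cases hl' : l = j
          · subst hl'
            exact hswap _ _ (hAJK k hk hk')
          · obtain ⟨p, ⟨hp, _⟩, q, ⟨hq, _⟩, hpq⟩ := St.adjw hkl (hTk l hl hl')
            refine ⟨p, ?_, q, ?_, hpq⟩
            · rw [hFk k hk hk']; exact hp
            · rw [hFk l hl hl']; exact hq

/-- Case: the three triangle vertices lie in three distinct branches, with the branches of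
`a` and `b` joined through the roots. -/
lemma case4 (St : Setup G Gp T V₁ V₂ B r) {ia ib ic : Fin 4}
    (hab' : ia ≠ ib) (hac' : ia ≠ ic) (hbc' : ib ≠ ic) {a b c : V}
    (haT : a ∈ T) (hbT : b ∈ T) (hcT : c ∈ T)
    (hab : a ≠ b) (hac : a ≠ c) (hbc : b ≠ c)
    (haB : a ∈ B ia) (hbB : b ∈ B ib) (hcB : c ∈ B ic)
    (hOWN : ∀ t ∈ T, ∀ k, t ∈ B k →
      (t = a ∧ k = ia) ∨ (t = b ∧ k = ib) ∨ (t = c ∧ k = ic))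
    (hadjroots : G.Adj (r ia) (r ib))
    (hDa : ∃ d, (d ∈ V₁ \ {a, b} ∧ Rel G (V₁ \ {a, b}) d c) ∧ G.Adj d a)
    (hDb : ∃ d, (d ∈ V₁ \ {a, b} ∧ Rel G (V₁ \ {a, b}) d c) ∧ G.Adj d b) :
    Good G (fun k => if k = ic then
        (B ic ∩ V₂) ∪ {v | v ∈ V₁ \ {a, b} ∧ Rel G (V₁ \ {a, b}) v c}
      else B k ∩ V₂) r := by
  set D : Set V := {v | v ∈ V₁ \ {a, b} ∧ Rel G (V₁ \ {a, b}) v c} with hD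
  set F : Fin 4 → Set V := fun k => if k = ic then (B ic ∩ V₂) ∪ D else B k ∩ V₂ with hF
  have hFc : F ic = (B ic ∩ V₂) ∪ D := if_pos rfl
  have hFk : ∀ k, k ≠ ic → F k = B k ∩ V₂ := fun k h1 => if_neg h1
  have hcD : c ∈ D := ⟨⟨St.hT1 hcT, by simp [hac.symm ,hbc.symm]⟩, Relation.ReflTransGen.refl⟩
  -- triangle ownership facts
  have hOwnK : ∀ k, ∀ t ∈ T, t ∈ B k → (k = ia ∧ t = a) ∨ (k = ib ∧ t = b) ∨
      (k = ic ∧ t = c) := by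
    intro k t ht htB
    rcases hOWN t ht k htB with ⟨h1, h2⟩ | ⟨h1, h2⟩ | ⟨h1, h2⟩
    exacts [Or.inl ⟨h2, h1⟩, Or.inr (Or.inl ⟨h2, h1⟩), Or.inr (Or.inr ⟨h2, h1⟩)]
  have hsmallD : ∀ k, k ≠ ic → ∃ t, ∀ a' ∈ B k, a' ∈ V₁ → a' ∈ V₂ → a' = t := by
    intro k hk
    by_cases h1 : k = ia
    · refine ⟨a, fun a' ha' hv1 hv2 => ?_⟩
      rcases hOwnK k a' (St.hTV a' hv1 hv2) ha' with ⟨_, h⟩ | ⟨h, _⟩ | ⟨h, _⟩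
      exacts [h, absurd (h1.symm.trans h) hab', absurd h hk]
    · by_cases h2 : k = ib
      · refine ⟨b, fun a' ha' hv1 hv2 => ?_⟩
        rcases hOwnK k a' (St.hTV a' hv1 hv2) ha' with ⟨h, _⟩ | ⟨_, h⟩ | ⟨h, _⟩
        exacts [absurd (h2.symm.trans h).symm hab', h, absurd h hk]
      · refine ⟨r k, fun a' ha' hv1 hv2 => ?_⟩
        rcases hOwnK k a' (St.hTV a' hv1 hv2) ha' with ⟨h, _⟩ | ⟨h, _⟩ | ⟨h, _⟩
        exacts [absurd h h1, absurd h h2, absurd h hk]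
  have hsmallRel : ∀ k, k ≠ ic → ∀ u ∈ B k ∩ V₂, ∀ v ∈ B k ∩ V₂, Rel G (B k ∩ V₂) u v := by
    intro k hk u hu v hv
    obtain ⟨t, hD'⟩ := hsmallD k hk
    exact (small St.hEdge St.hW St.hT1 St.hT2 hD' (St.hBrel k u hu.1 v hv.1) hv.2).1 hu.2
  have hDc : ∀ a' ∈ B ic, a' ∈ V₁ → a' ∈ V₂ → a' = c := by
    intro a' ha' hv1 hv2
    rcases hOwnK ic a' (St.hTV a' hv1 hv2) ha' with ⟨h, h'⟩ | ⟨h, h'⟩ | ⟨_, h'⟩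
    exacts [absurd h.symm hac', absurd h.symm hbc', h']
  -- disjointness of D from other branches (inside V₂)
  have hDdisj : ∀ k, k ≠ ic → ∀ v, v ∈ D → v ∈ B k → v ∈ V₂ → False := by
    intro k hk v hvD hvB hvV
    have hvT : v ∈ T := St.hTV v hvD.1.1 hvV
    rcases hOwnK k v hvT hvB with ⟨_, h⟩ | ⟨_, h⟩ | ⟨h, _⟩
    · exact hvD.1.2 (by simp [h])
    · exact hvD.1.2 (by simp [h])
    · exact hk h
  refine ⟨?_, ?_, ?_, ?_⟩
  · intro k
    by_cases hk : k = ic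
    · rw [hk, hFc]; exact Or.inl ⟨St.hroot ic, St.hrV ic⟩
    · rw [hFk k hk]; exact ⟨St.hroot k, St.hrV k⟩
  · intro k u hu v hv
    by_cases hk : k = ic
    · rw [hk, hFc] at hu hv ⊢
      have hto : ∀ w ∈ (B ic ∩ V₂) ∪ D, Rel G ((B ic ∩ V₂) ∪ D) w c := by
        rintro w (hw | hw)
        · exact ((small St.hEdge St.hW St.hT1 St.hT2 hDc
            (St.hBrel ic w hw.1 c hcB) (St.hT2 hcT)).1 hw.2).mono le_rfl
            Set.subset_union_left
        · exact (rel_comp hw.2).mono le_rfl Set.subset_union_right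
      exact (hto u hu).trans (hto v hv).symm
    · rw [hFk k hk] at hu hv ⊢
      exact hsmallRel k hk u hu v hv
  · intro k l hkl v hv1 hv2
    by_cases hk : k = ic
    · rw [hk, hFc] at hv1
      have hlc : l ≠ ic := fun h => hkl (hk.trans h.symm)
      rw [hFk l hlc] at hv2
      rcases hv1 with hv1 | hv1
      · exact St.hdisj ic l (Ne.symm hlc) v hv1.1 hv2.1
      · exact hDdisj l hlc v hv1 hv2.1 hv2.2
    · rw [hFk k hk] at hv1
      by_cases hl : l = ic
      · rw [hl, hFc] at hv2
        rcases hv2 with hv2 | hv2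
        · exact St.hdisj k ic (hl ▸ hkl) v hv1.1 hv2.1
        · exact hDdisj k hk v hv2 hv1.1 hv1.2
      · rw [hFk l hl] at hv2
        exact St.hdisj k l hkl v hv1.1 hv2.1
  · -- adjacency
    have hTfree : ∀ k, k ≠ ia → k ≠ ib → k ≠ ic → ∀ t ∈ T, t ∉ B k := by
      intro k h1 h2 h3 t ht htB
      rcases hOwnK k t ht htB with ⟨h, _⟩ | ⟨h, _⟩ | ⟨h, _⟩
      exacts [h1 h, h2 h, h3 h]
    have hmemF : ∀ k, k ≠ ic → ∀ w, w ∈ B k ∩ V₂ → w ∈ F k := by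
      intro k hk w hw; rw [hFk k hk]; exact hw
    have hadjCA : ∃ p ∈ F ic, ∃ q ∈ F ia, G.Adj p q := by
      obtain ⟨d, hdD, hda⟩ := hDa
      refine ⟨d, ?_, a, hmemF ia hac' a ⟨haB, St.hT2 haT⟩, hda⟩
      rw [hFc]; exact Or.inr hdD
    have hadjCB : ∃ p ∈ F ic, ∃ q ∈ F ib, G.Adj p q := by
      obtain ⟨d, hdD, hdb⟩ := hDb
      refine ⟨d, ?_, b, hmemF ib hbc' b ⟨hbB, St.hT2 hbT⟩, hdb⟩
      rw [hFc]; exact Or.inr hdD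
    have hadjAB : ∃ p ∈ F ia, ∃ q ∈ F ib, G.Adj p q :=
      ⟨r ia, hmemF ia hac' _ ⟨St.hroot ia, St.hrV ia⟩,
       r ib, hmemF ib hbc' _ ⟨St.hroot ib, St.hrV ib⟩, hadjroots⟩
    have hgen : ∀ k l, k ≠ l → l ≠ ia → l ≠ ib → l ≠ ic →
        ∃ p ∈ F k, ∃ q ∈ F l, G.Adj p q := by
      intro k l hkl h1 h2 h3
      obtain ⟨p, ⟨hp, hpV⟩, q, ⟨hq, hqV⟩, hpq⟩ := St.adjw hkl (hTfree l h1 h2 h3)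
      refine ⟨p, ?_, q, hmemF l h3 q ⟨hq, hqV⟩, hpq⟩
      by_cases hk : k = ic
      · rw [hk, hFc]; exact Or.inl ⟨hk ▸ hp, hpV⟩
      · exact hmemF k hk p ⟨hp, hpV⟩
    have hswap : ∀ k l, (∃ p ∈ F k, ∃ q ∈ F l, G.Adj p q) →
        ∃ p ∈ F l, ∃ q ∈ F k, G.Adj p q := by
      rintro k l ⟨p, hp, q, hq, hpq⟩; exact ⟨q, hq, p, hp, hpq.symm⟩
    intro k l hkl
    by_cases hka : k = ia
    · by_cases hlb : l = ib
      · rw [hka, hlb]; exact hadjAB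
      · by_cases hlc : l = ic
        · rw [hka, hlc]; exact hswap _ _ hadjCA
        · exact hgen k l hkl (fun h => hkl (hka.trans h.symm)) hlb hlc
    · by_cases hkb : k = ib
      · by_cases hla : l = ia
        · rw [hkb, hla]; exact hswap _ _ hadjAB
        · by_cases hlc : l = ic
          · rw [hkb, hlc]; exact hswap _ _ hadjCB
          · exact hgen k l hkl hla (fun h => hkl (hkb.trans h.symm)) hlc
      · by_cases hkc : k = ic
        · by_cases hla : l = ia
          · rw [hkc, hla]; exact hadjCA
          · by_cases hlb : l = ib
            · rw [hkc, hlb]; exact hadjCB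
            · exact hgen k l hkl hla hlb (fun h => hkl (hkc.trans h.symm))
        · exact hswap _ _ (hgen l k (Ne.symm hkl) hka hkb hkc)

end Abstract

section Concrete

variable {V : Type} [Fintype V] {G : SimpleGraph V} {G₁ : G.Subgraph} {x y z : V}

lemma tri_mem_iff (hxy : x ≠ y) (hyz : y ≠ z) (hxz : x ≠ z) {a b : V} (hab : a ≠ b) :
    s(a, b) ∈ triEdges3 x y z ↔ a ∈ ({x, y, z} : Set V) ∧ b ∈ ({x, y, z} : Set V) := by
  constructor
  · intro h
    simp only [triEdges3, Set.mem_insert_iff, Set.mem_singleton_iff, Sym2.eq_iff] at h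
    rcases h with (⟨rfl, rfl⟩ | ⟨rfl, rfl⟩) | (⟨rfl, rfl⟩ | ⟨rfl, rfl⟩) |
      (⟨rfl, rfl⟩ | ⟨rfl, rfl⟩) <;> simp
  · rintro ⟨ha, hb⟩
    simp only [Set.mem_insert_iff, Set.mem_singleton_iff] at ha hb
    rcases ha with rfl | rfl | rfl <;> rcases hb with rfl | rfl | rfl <;>
      first
        | exact absurd rfl hab
        | simp [triEdges3, Sym2.eq_iff]

lemma tmem_abc (hxy : x ≠ y) (hyz : y ≠ z) (hxz : x ≠ z) {a b c : V}
    (ha : a ∈ ({x, y, z} : Set V)) (hb : b ∈ ({x, y, z} : Set V))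
    (hc : c ∈ ({x, y, z} : Set V)) (hab : a ≠ b) (hac : a ≠ c) (hbc : b ≠ c) :
    ∀ t ∈ ({x, y, z} : Set V), t = a ∨ t = b ∨ t = c := by
  have h1 : ({a, b, c} : Set V) ⊆ {x, y, z} := by
    rintro t (rfl | rfl | rfl)
    exacts [ha, hb, hc]
  have h2 : ({a, b, c} : Set V).ncard = 3 := Set.ncard_eq_three.mpr ⟨a, b, c, hab, hac, hbc, rfl⟩
  have h3 : ({x, y, z} : Set V).ncard = 3 := Set.ncard_eq_three.mpr ⟨x, y, z, hxy, hxz, hyz, rfl⟩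
  have he := Set.eq_of_subset_of_ncard_le h1 (by rw [h2, h3]) (Set.toFinite _)
  intro t ht
  rw [← he] at ht
  simpa using ht

lemma tmem_third (hxy : x ≠ y) (hyz : y ≠ z) (hxz : x ≠ z) {p q : V}
    (hp : p ∈ ({x, y, z} : Set V)) (hq : q ∈ ({x, y, z} : Set V)) (hpq : p ≠ q) :
    ∃ w ∈ ({x, y, z} : Set V), w ≠ p ∧ w ≠ q := by
  simp only [Set.mem_insert_iff, Set.mem_singleton_iff] at hp hq
  rcases hp with rfl | rfl | rfl <;> rcases hq with rfl | rfl | rfl <;>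
    first
      | exact absurd rfl hpq
      | exact ⟨x, by simp, by tauto, by tauto⟩
      | exact ⟨y, by simp, by tauto, by tauto⟩
      | exact ⟨z, by simp, by tauto, by tauto⟩

lemma pre_ncard_le {W : Set V} (Sv : Set V) :
    ((Subtype.val ⁻¹' Sv) : Set ↥W).ncard ≤ Sv.ncard := by
  rw [← Set.ncard_image_of_injective _ Subtype.val_injective]
  exact Set.ncard_le_ncard (Set.image_preimage_subset _ _) (Set.toFinite _)

lemma pre_ncard_pair {W : Set V} (a b : V) :
    ((Subtype.val ⁻¹' ({a, b} : Set V)) : Set ↥W).ncard < 3 := by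
  refine lt_of_le_of_lt (pre_ncard_le _) ?_
  have h1 : ({a, b} : Set V).ncard ≤ 2 := by
    refine (Set.ncard_insert_le _ _).trans ?_
    simp [Set.ncard_singleton]
  omega

lemma pre_ncard_sing {W : Set V} (a : V) :
    ((Subtype.val ⁻¹' ({a} : Set V)) : Set ↥W).ncard < 3 := by
  refine lt_of_le_of_lt (pre_ncard_le _) ?_
  simp

lemma pre_ncard_empty {W : Set V} :
    ((Subtype.val ⁻¹' (∅ : Set V)) : Set ↥W).ncard < 3 := by
  simp

/-- Extracting connectivity after deleting at most two vertices from `h3c`. -/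
lemma connA (hxy : x ≠ y) (hyz : y ≠ z) (hxz : x ≠ z)
    (h3c : IsKConnected 3
      ((G₁.spanningCoe ⊔ SimpleGraph.fromEdgeSet (triEdges3 x y z)).induce G₁.verts))
    (Sv : Set V) (hS : ((Subtype.val ⁻¹' Sv) : Set ↥G₁.verts).ncard < 3)
    {u v : V} (hu : u ∈ G₁.verts \ Sv) (hv : v ∈ G₁.verts \ Sv) :
    Relation.ReflTransGen (fun p q =>
      (G₁.Adj p q ∨ (p ∈ ({x, y, z} : Set V) ∧ q ∈ ({x, y, z} : Set V) ∧ p ≠ q)) ∧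
      p ∈ G₁.verts \ Sv ∧ q ∈ G₁.verts \ Sv) u v := by
  have hconn := h3c.2 (Subtype.val ⁻¹' Sv) hS
  have hu' : (⟨u, hu.1⟩ : ↥G₁.verts) ∈ (Subtype.val ⁻¹' Sv)ᶜ := hu.2
  have hv' : (⟨v, hv.1⟩ : ↥G₁.verts) ∈ (Subtype.val ⁻¹' Sv)ᶜ := hv.2
  have hrel := rel_of_connected hconn hu' hv'
  refine Relation.ReflTransGen.lift (f := (Subtype.val : ↥G₁.verts → V)) ?_ _ _ hrel
  rintro p q ⟨hadj, hp, hq⟩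
  refine ⟨?_, ⟨p.2, hp⟩, ⟨q.2, hq⟩⟩
  simp only [comap_adj, Function.Embedding.coe_subtype, sup_adj,
    Subgraph.spanningCoe_adj, fromEdgeSet_adj] at hadj
  rcases hadj with h | ⟨hm, hne⟩
  · exact Or.inl h
  · obtain ⟨h1, h2⟩ := (tri_mem_iff hxy hyz hxz hne).1 hm
    exact Or.inr ⟨h1, h2, hne⟩

lemma exists_far (h3c : IsKConnected 3
      ((G₁.spanningCoe ⊔ SimpleGraph.fromEdgeSet (triEdges3 x y z)).induce G₁.verts))
    (a b c : V) : ∃ w ∈ G₁.verts, w ≠ a ∧ w ≠ b ∧ w ≠ c := by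
  by_contra h
  push_neg at h
  have hsub : G₁.verts ⊆ {a, b, c} := by
    intro w hw
    by_cases h1 : w = a
    · simp [h1]
    · by_cases h2 : w = b
      · simp [h2]
      · simp [h w hw h1 h2]
  have hcard := h3c.1
  rw [Nat.card_coe_set_eq] at hcard
  have hle : G₁.verts.ncard ≤ 3 := by
    refine (Set.ncard_le_ncard hsub (Set.toFinite _)).trans ?_
    refine (Set.ncard_insert_le _ _).trans ?_
    refine Nat.succ_le_succ ?_
    refine (Set.ncard_insert_le _ _).trans ?_
    simp
  omega

end Concrete

section Core

variable {V : Type} [Fintype V] {G : SimpleGraph V} {G₁ : G.Subgraph} {x y z : V}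

/-- Every triangle vertex has a neighbour in `G₁`. -/
lemma nbrL (hxy : x ≠ y) (hyz : y ≠ z) (hxz : x ≠ z)
    (h3c : IsKConnected 3
      ((G₁.spanningCoe ⊔ SimpleGraph.fromEdgeSet (triEdges3 x y z)).induce G₁.verts))
    {a b c : V} (ha : a ∈ ({x, y, z} : Set V)) (hb : b ∈ ({x, y, z} : Set V))
    (hc : c ∈ ({x, y, z} : Set V)) (hab : a ≠ b) (hac : a ≠ c) (hbc : b ≠ c)
    (hcV₁ : c ∈ G₁.verts) : ∃ u, G₁.Adj c u := by
  by_contra hno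
  push_neg at hno
  have hTmem := tmem_abc hxy hyz hxz ha hb hc hab hac hbc
  obtain ⟨w, hwV, hwa, hwb, hwc⟩ := exists_far h3c a b c
  have hrel := connA hxy hyz hxz h3c {a, b} (pre_ncard_pair a b)
    (u := c) (v := w) ⟨hcV₁, by simp [Ne.symm hac, Ne.symm hbc]⟩ ⟨hwV, by simp [hwa, hwb]⟩
  refine hwc (rel_closed (A := {c}) ?_ hrel rfl)
  rintro p q hp ⟨hadj, _, hq1, hq2⟩
  have hp' : p = c := hp
  subst hp'
  rcases hadj with h | ⟨hpT, hqT, hne⟩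
  · exact absurd h (hno q)
  · rcases hTmem q hqT with rfl | rfl | rfl
    · exact absurd (by simp : q ∈ ({q, b} : Set V)) hq2
    · exact absurd (by simp : q ∈ ({a, q} : Set V)) hq2
    · rfl

/-- Any two triangle vertices are connected through `V₁` in `G`. -/
lemma relTL (hxy : x ≠ y) (hyz : y ≠ z) (hxz : x ≠ z)
    (h3c : IsKConnected 3
      ((G₁.spanningCoe ⊔ SimpleGraph.fromEdgeSet (triEdges3 x y z)).induce G₁.verts))
    {a b c : V} (ha : a ∈ ({x, y, z} : Set V)) (hb : b ∈ ({x, y, z} : Set V))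
    (hc : c ∈ ({x, y, z} : Set V)) (hab : a ≠ b) (hac : a ≠ c) (hbc : b ≠ c)
    (haV₁ : a ∈ G₁.verts) (hbV₁ : b ∈ G₁.verts) (hcV₁ : c ∈ G₁.verts) :
    Rel G G₁.verts a b := by
  by_contra hnot
  set V₁ := G₁.verts with hV₁
  set A := {v | v ∈ V₁ ∧ Rel G V₁ v a} with hA
  have haA : a ∈ A := ⟨haV₁, Relation.ReflTransGen.refl⟩
  have hclosed : ∀ p q, p ∈ A → G₁.Adj p q → q ∈ A := fun p q hp h =>
    ⟨h.snd_mem, Relation.ReflTransGen.head ⟨(G₁.adj_sub h).symm, h.snd_mem, h.fst_mem⟩ hp.2⟩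
  have hbA : b ∉ A := fun h' => hnot h'.2.symm
  have hTmem := tmem_abc hxy hyz hxz ha hb hc hab hac hbc
  by_cases hca : Rel G V₁ c a
  · by_cases hcb : Rel G V₁ c b
    · exact hnot (hca.symm.trans hcb)
    · have hcA : c ∈ A := ⟨hcV₁, hca⟩
      by_cases hbig : ∃ d, d ∈ A ∧ d ≠ a ∧ d ≠ c
      · obtain ⟨d, hdA, hda, hdc⟩ := hbig
        have hrel := connA hxy hyz hxz h3c {a, c} (pre_ncard_pair a c)
          (u := d) (v := b) ⟨hdA.1, by simp [hda, hdc]⟩ ⟨hbV₁, by simp [Ne.symm hab, hbc]⟩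
        refine hbA (rel_closed (A := {v | v ∈ A ∧ v ≠ a ∧ v ≠ c}) ?_ hrel ⟨hdA, hda, hdc⟩).1
        rintro p q ⟨hpA, hpa, hpc⟩ ⟨hadj, _, hq1, hq2⟩
        rcases hadj with h | ⟨hpT, hqT, hne⟩
        · refine ⟨hclosed p q hpA h, fun h' => hq2 (by simp [h']), fun h' => hq2 (by simp [h'])⟩
        · rcases hTmem p hpT with rfl | rfl | rfl
          exacts [absurd rfl hpa, absurd hpA hbA, absurd rfl hpc]
      · have hnbrs : ∀ u, G₁.Adj a u → u = c := by
          intro u h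
          have huA := hclosed a u haA h
          by_cases h' : u = c
          · exact h'
          · have hua : u = a := by
              by_contra h''
              exact hbig ⟨u, huA, h'', h'⟩
            exact absurd (G₁.adj_sub (hua ▸ h)) (G.irrefl)
        obtain ⟨w, hwV, hwa, hwb, hwc⟩ := exists_far h3c a b c
        have hrel := connA hxy hyz hxz h3c {b, c} (pre_ncard_pair b c)
          (u := a) (v := w) ⟨haV₁, by simp [hab, hac]⟩ ⟨hwV, by simp [hwb, hwc]⟩
        refine hwa (rel_closed (A := {a}) ?_ hrel rfl)
        rintro p q hp ⟨hadj, _, hq1, hq2⟩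
        have hp' : p = a := hp
        subst hp'
        rcases hadj with h | ⟨hpT, hqT, hne⟩
        · exact absurd (hnbrs q h) (fun h' => hq2 (by simp [h']))
        · rcases hTmem q hqT with rfl | rfl | rfl
          · rfl
          · exact absurd (by simp : q ∈ ({q, c} : Set V)) hq2
          · exact absurd (by simp : q ∈ ({b, q} : Set V)) hq2
  · have hcA : c ∉ A := fun h => hca h.2
    by_cases hbig : ∃ d, d ∈ A ∧ d ≠ a
    · obtain ⟨d, hdA, hda⟩ := hbig
      have hdc : d ≠ c := fun h => hcA (h ▸ hdA)
      have hrel := connA hxy hyz hxz h3c {a, c} (pre_ncard_pair a c)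
        (u := d) (v := b) ⟨hdA.1, by simp [hda, hdc]⟩ ⟨hbV₁, by simp [Ne.symm hab, hbc]⟩
      refine hbA (rel_closed (A := {v | v ∈ A ∧ v ≠ a}) ?_ hrel ⟨hdA, hda⟩).1
      rintro p q ⟨hpA, hpa⟩ ⟨hadj, _, hq1, hq2⟩
      rcases hadj with h | ⟨hpT, hqT, hne⟩
      · exact ⟨hclosed p q hpA h, fun h' => hq2 (by simp [h'])⟩
      · rcases hTmem p hpT with rfl | rfl | rfl
        exacts [absurd rfl hpa, absurd hpA hbA, absurd hpA hcA]
    · have hnbrs : ∀ u, ¬ G₁.Adj a u := by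
        intro u h
        have huA := hclosed a u haA h
        have hua : u = a := by
          by_contra h''
          exact hbig ⟨u, huA, h''⟩
        exact absurd (G₁.adj_sub (hua ▸ h)) (G.irrefl)
      obtain ⟨w, hwV, hwa, hwb, hwc⟩ := exists_far h3c a b c
      have hrel := connA hxy hyz hxz h3c {b, c} (pre_ncard_pair b c)
        (u := a) (v := w) ⟨haV₁, by simp [hab, hac]⟩ ⟨hwV, by simp [hwb, hwc]⟩
      refine hwa (rel_closed (A := {a}) ?_ hrel rfl)
      rintro p q hp ⟨hadj, _, hq1, hq2⟩
      have hp' : p = a := hp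
      subst hp'
      rcases hadj with h | ⟨hpT, hqT, hne⟩
      · exact absurd h (hnbrs q)
      · rcases hTmem q hqT with rfl | rfl | rfl
        · rfl
        · exact absurd (by simp : q ∈ ({q, c} : Set V)) hq2
        · exact absurd (by simp : q ∈ ({b, q} : Set V)) hq2

/-- Two triangle vertices are connected through `V₁` avoiding the third. -/
lemma relT2L (hxy : x ≠ y) (hyz : y ≠ z) (hxz : x ≠ z)
    (h3c : IsKConnected 3
      ((G₁.spanningCoe ⊔ SimpleGraph.fromEdgeSet (triEdges3 x y z)).induce G₁.verts))
    {a b c : V} (ha : a ∈ ({x, y, z} : Set V)) (hb : b ∈ ({x, y, z} : Set V))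
    (hc : c ∈ ({x, y, z} : Set V)) (hab : a ≠ b) (hac : a ≠ c) (hbc : b ≠ c)
    (haV₁ : a ∈ G₁.verts) (hbV₁ : b ∈ G₁.verts) :
    Rel G (G₁.verts \ {c}) a b := by
  by_contra hnot
  set S : Set V := G₁.verts \ {c} with hS
  set A := {v | v ∈ S ∧ Rel G S v a} with hA
  have haS : a ∈ S := ⟨haV₁, by simp [hac]⟩
  have hbS : b ∈ S := ⟨hbV₁, by simp [hbc]⟩
  have haA : a ∈ A := ⟨haS, Relation.ReflTransGen.refl⟩
  have hclosed : ∀ p q, p ∈ A → G₁.Adj p q → q ≠ c → q ∈ A := fun p q hp h hqc =>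
    ⟨⟨h.snd_mem, hqc⟩, Relation.ReflTransGen.head
      ⟨(G₁.adj_sub h).symm, ⟨h.snd_mem, hqc⟩, hp.1⟩ hp.2⟩
  have hbA : b ∉ A := fun h' => hnot h'.2.symm
  have hTmem := tmem_abc hxy hyz hxz ha hb hc hab hac hbc
  by_cases hbig : ∃ d, d ∈ A ∧ d ≠ a
  · obtain ⟨d, hdA, hda⟩ := hbig
    have hdc : d ≠ c := hdA.1.2
    have hrel := connA hxy hyz hxz h3c {a, c} (pre_ncard_pair a c)
      (u := d) (v := b) ⟨hdA.1.1, by simp [hda, hdc]⟩ ⟨hbV₁, by simp [Ne.symm hab, hbc]⟩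
    refine hbA (rel_closed (A := {v | v ∈ A ∧ v ≠ a}) ?_ hrel ⟨hdA, hda⟩).1
    rintro p q ⟨hpA, hpa⟩ ⟨hadj, _, hq1, hq2⟩
    have hqa : q ≠ a := fun h' => hq2 (by simp [h'])
    have hqc : q ≠ c := fun h' => hq2 (by simp [h'])
    rcases hadj with h | ⟨hpT, hqT, hne⟩
    · exact ⟨hclosed p q hpA h hqc, hqa⟩
    · rcases hTmem p hpT with rfl | rfl | rfl
      exacts [absurd rfl hpa, absurd hpA hbA, absurd hpA.1.2 (fun h' => h' rfl)]
  · have hnbrs : ∀ u, G₁.Adj a u → u = c := by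
      intro u h
      by_cases h' : u = c
      · exact h'
      · have huA := hclosed a u haA h h'
        have hua : u = a := by
          by_contra h''
          exact hbig ⟨u, huA, h''⟩
        exact absurd (G₁.adj_sub (hua ▸ h)) (G.irrefl)
    obtain ⟨w, hwV, hwa, hwb, hwc⟩ := exists_far h3c a b c
    have hrel := connA hxy hyz hxz h3c {b, c} (pre_ncard_pair b c)
      (u := a) (v := w) ⟨haV₁, by simp [hab, hac]⟩ ⟨hwV, by simp [hwb, hwc]⟩
    refine hwa (rel_closed (A := {a}) ?_ hrel rfl)
    rintro p q hp ⟨hadj, _, hq1, hq2⟩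
    have hp' : p = a := hp
    subst hp'
    rcases hadj with h | ⟨hpT, hqT, hne⟩
    · exact absurd (hnbrs q h) (fun h' => hq2 (by simp [h']))
    · rcases hTmem q hqT with rfl | rfl | rfl
      · rfl
      · exact absurd (by simp : q ∈ ({q, c} : Set V)) hq2
      · exact absurd (by simp : q ∈ ({b, q} : Set V)) hq2

/-- The component of `c` in `G₁ - {a,b}` is adjacent to `a`. -/
lemma relCompL (hxy : x ≠ y) (hyz : y ≠ z) (hxz : x ≠ z)
    (h3c : IsKConnected 3
      ((G₁.spanningCoe ⊔ SimpleGraph.fromEdgeSet (triEdges3 x y z)).induce G₁.verts))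
    {a b c : V} (ha : a ∈ ({x, y, z} : Set V)) (hb : b ∈ ({x, y, z} : Set V))
    (hc : c ∈ ({x, y, z} : Set V)) (hab : a ≠ b) (hac : a ≠ c) (hbc : b ≠ c)
    (haV₁ : a ∈ G₁.verts) (hcV₁ : c ∈ G₁.verts) :
    ∃ d, (d ∈ G₁.verts \ {a, b} ∧ Rel G (G₁.verts \ {a, b}) d c) ∧ G.Adj d a := by
  by_contra hno
  push_neg at hno
  set S : Set V := G₁.verts \ {a, b} with hS
  set D := {v | v ∈ S ∧ Rel G S v c} with hD
  have hcS : c ∈ S := ⟨hcV₁, by simp [Ne.symm hac, Ne.symm hbc]⟩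
  have hcD : c ∈ D := ⟨hcS, Relation.ReflTransGen.refl⟩
  have hclosed : ∀ p q, p ∈ D → G₁.Adj p q → q ≠ a → q ≠ b → q ∈ D := by
    intro p q hp h hqa hqb
    have hqS : q ∈ S := ⟨h.snd_mem, by simp [hqa, hqb]⟩
    exact ⟨hqS, Relation.ReflTransGen.head ⟨(G₁.adj_sub h).symm, hqS, hp.1⟩ hp.2⟩
  have hTmem := tmem_abc hxy hyz hxz ha hb hc hab hac hbc
  have hDT : ∀ p ∈ D, p ∈ ({x, y, z} : Set V) → p = c := by
    intro p hp hpT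
    rcases hTmem p hpT with rfl | rfl | rfl
    · exact absurd (by simp : p ∈ ({p, b} : Set V)) hp.1.2
    · exact absurd (by simp : p ∈ ({a, p} : Set V)) hp.1.2
    · rfl
  by_cases hbig : ∃ d, d ∈ D ∧ d ≠ c
  · obtain ⟨d, hdD, hdc⟩ := hbig
    have hrel := connA hxy hyz hxz h3c {b, c} (pre_ncard_pair b c)
      (u := d) (v := a)
      ⟨hdD.1.1, by
        have hdb : d ≠ b := fun h' => hdD.1.2 (by simp [h'])
        simp [hdb, hdc]⟩
      ⟨haV₁, by simp [hab, hac]⟩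
    have hfin := rel_closed (A := {v | v ∈ D ∧ v ≠ c}) ?_ hrel ⟨hdD, hdc⟩
    · exact absurd (by simp : a ∈ ({a, b} : Set V)) hfin.1.1.2
    rintro p q ⟨hpD, hpc⟩ ⟨hadj, _, hq1, hq2⟩
    have hqb : q ≠ b := fun h' => hq2 (by simp [h'])
    have hqc : q ≠ c := fun h' => hq2 (by simp [h'])
    rcases hadj with h | ⟨hpT, hqT, hne⟩
    · have hqa : q ≠ a := by
        rintro rfl
        exact hno p ⟨hpD.1, hpD.2⟩ (G₁.adj_sub h)
      exact ⟨hclosed p q hpD h hqa hqb, hqc⟩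
    · exact absurd (hDT p hpD hpT) hpc
  · have hnbrs : ∀ u, G₁.Adj c u → u = b := by
      intro u h
      by_cases hua : u = a
      · exact absurd (G₁.adj_sub (hua ▸ h)) (fun h' => hno c ⟨hcS, Relation.ReflTransGen.refl⟩ h')
      · by_cases hub : u = b
        · exact hub
        · have huD := hclosed c u hcD h hua hub
          have huc : u = c := by
            by_contra h''
            exact hbig ⟨u, huD, h''⟩
          exact absurd (G₁.adj_sub (huc ▸ h)) (G.irrefl)
    obtain ⟨w, hwV, hwa, hwb, hwc⟩ := exists_far h3c a b c
    have hrel := connA hxy hyz hxz h3c {a, b} (pre_ncard_pair a b)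
      (u := c) (v := w) ⟨hcV₁, by simp [Ne.symm hac, Ne.symm hbc]⟩ ⟨hwV, by simp [hwa, hwb]⟩
    refine hwc (rel_closed (A := {c}) ?_ hrel rfl)
    rintro p q hp ⟨hadj, _, hq1, hq2⟩
    have hp' : p = c := hp
    subst hp'
    rcases hadj with h | ⟨hpT, hqT, hne⟩
    · exact absurd (hnbrs q h) (fun h' => hq2 (by simp [h']))
    · rcases hTmem q hqT with rfl | rfl | rfl
      · exact absurd (by simp : q ∈ ({q, b} : Set V)) hq2
      · exact absurd (by simp : q ∈ ({a, q} : Set V)) hq2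
      · rfl

end Core

/-- Couples of roots joined by the specified edges. -/
def Couple (p q : Fin 4) : Prop :=
  (p = 0 ∧ q = 1) ∨ (p = 1 ∧ q = 0) ∨ (p = 2 ∧ q = 3) ∨ (p = 3 ∧ q = 2)

instance : ∀ p q : Fin 4, Decidable (Couple p q) := fun p q => by
  unfold Couple; infer_instance

lemma fin4_couple : ∀ i j k : Fin 4, i ≠ j → i ≠ k → j ≠ k →
    Couple i j ∨ Couple i k ∨ Couple j k := by decide

end TriComp


open TriComp in
theorem triangle_completion_K4star_minor'
    {V : Type} [Fintype V] (G : SimpleGraph V) (s₁ t₁ s₂ t₂ x y z : V)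
    (h₁ : G.Adj s₁ t₁) (h₂ : G.Adj s₂ t₂)
    (hd : ([s₁, t₁, s₂, t₂] : List V).Nodup)
    (hxy : x ≠ y) (hyz : y ≠ z) (hxz : x ≠ z)
    (G₁ G₂ : G.Subgraph)
    (hsep : IsKSeparation G G₁ G₂ 3)
    (hset : G₁.verts ∩ G₂.verts = {x, y, z})
    (h3c : IsKConnected 3
      ((G₁.spanningCoe ⊔ SimpleGraph.fromEdgeSet (triEdges3 x y z)).induce G₁.verts))
    (he₁ : s(s₁, t₁) ∉ G₁.edgeSet \ triEdges3 x y z)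
    (he₂ : s(s₂, t₂) ∉ G₁.edgeSet \ triEdges3 x y z) :
    HasK4starMinor (G ⊔ SimpleGraph.fromEdgeSet (triEdges3 x y z)) s₁ t₁ s₂ t₂ ↔
      HasK4starMinor G s₁ t₁ s₂ t₂ := by
  classical
  constructor
  · intro hM
    obtain ⟨B, ⟨hroot, hconn, hdisjB⟩, hadjB⟩ := hM
    set Gp : SimpleGraph V := G ⊔ SimpleGraph.fromEdgeSet (triEdges3 x y z) with hGp
    set T : Set V := {x, y, z} with hT
    set r : Fin 4 → V := ![s₁, t₁, s₂, t₂] with hr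
    have hxT : x ∈ T := by simp [hT]
    have hyT : y ∈ T := by simp [hT]
    have hzT : z ∈ T := by simp [hT]
    have hsup : G₁ ⊔ G₂ = ⊤ := hsep.1.1
    have hGadj : ∀ a b, G.Adj a b ↔ G₁.Adj a b ∨ G₂.Adj a b := by
      intro a b
      have h := SimpleGraph.Subgraph.sup_adj (G₁ := G₁) (G₂ := G₂) (a := a) (b := b)
      rw [hsup, SimpleGraph.Subgraph.top_adj] at h
      exact h
    have hTV : ∀ a, a ∈ G₁.verts → a ∈ G₂.verts → a ∈ T := by
      intro a hu hv
      rw [← hset]; exact ⟨hu, hv⟩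
    have hT1 : T ⊆ G₁.verts := by rw [← hset]; exact Set.inter_subset_left
    have hT2 : T ⊆ G₂.verts := by rw [← hset]; exact Set.inter_subset_right
    have hW : ∀ a b, G.Adj a b → a ∉ G₂.verts → a ∈ G₁.verts ∧ b ∈ G₁.verts := by
      intro a b hab ha2
      rcases (hGadj a b).1 hab with h | h
      · exact ⟨h.fst_mem, h.snd_mem⟩
      · exact absurd h.fst_mem ha2
    have hEdge : ∀ a b, Gp.Adj a b → G.Adj a b ∨ (a ∈ T ∧ b ∈ T ∧ a ≠ b) := by
      intro a b hab
      rw [hGp, SimpleGraph.sup_adj, SimpleGraph.fromEdgeSet_adj] at hab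
      rcases hab with h | ⟨hm, hne⟩
      · exact Or.inl h
      · obtain ⟨hh1, hh2⟩ := (tri_mem_iff hxy hyz hxz hne).1 hm
        exact Or.inr ⟨hh1, hh2, hne⟩
    have hs₁V₂ : s₁ ∈ G₂.verts ∧ t₁ ∈ G₂.verts := by
      rcases (hGadj s₁ t₁).1 h₁ with h | h
      · have hm : s(s₁, t₁) ∈ triEdges3 x y z := by
          by_contra hm
          exact he₁ ⟨SimpleGraph.Subgraph.mem_edgeSet.mpr h, hm⟩
        obtain ⟨hh1, hh2⟩ := (tri_mem_iff hxy hyz hxz h₁.ne).1 hm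
        exact ⟨hT2 hh1, hT2 hh2⟩
      · exact ⟨h.fst_mem, h.snd_mem⟩
    have hs₂V₂ : s₂ ∈ G₂.verts ∧ t₂ ∈ G₂.verts := by
      rcases (hGadj s₂ t₂).1 h₂ with h | h
      · have hm : s(s₂, t₂) ∈ triEdges3 x y z := by
          by_contra hm
          exact he₂ ⟨SimpleGraph.Subgraph.mem_edgeSet.mpr h, hm⟩
        obtain ⟨hh1, hh2⟩ := (tri_mem_iff hxy hyz hxz h₂.ne).1 hm
        exact ⟨hT2 hh1, hT2 hh2⟩
      · exact ⟨h.fst_mem, h.snd_mem⟩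
    have hrV : ∀ i, r i ∈ G₂.verts := by
      intro i
      fin_cases i
      · exact hs₁V₂.1
      · exact hs₁V₂.2
      · exact hs₂V₂.1
      · exact hs₂V₂.2
    have hBrel : ∀ i, ∀ u ∈ B i, ∀ v ∈ B i, Rel Gp (B i) u v :=
      fun i u hu v hv => rel_of_connected (hconn i) hu hv
    have hdisj' : ∀ i j, i ≠ j → ∀ v, v ∈ B i → v ∉ B j :=
      fun i j hij v hv hv' => Set.disjoint_left.mp (hdisjB i j hij) hv hv'
    have hadj' : ∀ i j, i ≠ j → ∃ p ∈ B i, ∃ q ∈ B j, Gp.Adj p q :=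
      fun i j hij => hadjB i j hij
    have St : Setup G Gp T G₁.verts G₂.verts B r :=
      ⟨hEdge, hW, hTV, hT1, hT2, hroot, hrV, hBrel, hdisj', hadj'⟩
    have hV₁rel : ∀ u ∈ G₁.verts, ∀ v ∈ G₁.verts, Rel G G₁.verts u v := by
      intro u hu v hv
      have hrel := connA hxy hyz hxz h3c ∅ pre_ncard_empty (u := u) (v := v)
        ⟨hu, Set.notMem_empty u⟩ ⟨hv, Set.notMem_empty v⟩
      refine rel_bind ?_ hrel
      rintro p q ⟨hadj, hp, hq⟩
      rcases hadj with h | ⟨hpT, hqT, hne⟩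
      · exact Relation.ReflTransGen.single ⟨G₁.adj_sub h, h.fst_mem, h.snd_mem⟩
      · obtain ⟨w, hwT, hwp, hwq⟩ := tmem_third hxy hyz hxz hpT hqT hne
        exact relTL hxy hyz hxz h3c hpT hqT hwT hne (Ne.symm hwp) (Ne.symm hwq)
          (hT1 hpT) (hT1 hqT) (hT1 hwT)
    have hCrelAll : ∀ c' ∈ T, ∀ u ∈ G₁.verts \ {c'}, ∀ v ∈ G₁.verts \ {c'},
        Rel G (G₁.verts \ {c'}) u v := by
      intro c' hc' u hu v hv
      have hrel := connA hxy hyz hxz h3c {c'} (pre_ncard_sing c') (u := u) (v := v) hu hv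
      refine rel_bind ?_ hrel
      rintro p q ⟨hadj, hp, hq⟩
      rcases hadj with h | ⟨hpT, hqT, hne⟩
      · exact Relation.ReflTransGen.single ⟨G₁.adj_sub h, hp, hq⟩
      · have hpc : p ≠ c' := by simpa using hp.2
        have hqc : q ≠ c' := by simpa using hq.2
        exact relT2L hxy hyz hxz h3c hpT hqT hc' hne hpc hqc hp.1 hq.1
    have hnbrAll : ∀ c' ∈ T, ∃ u, G.Adj c' u ∧ u ∈ G₁.verts ∧ u ≠ c' := by
      intro c' hc'
      have hget : ∃ u, G₁.Adj c' u := by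
        have hc'' := hc'
        rw [hT] at hc''
        simp only [Set.mem_insert_iff, Set.mem_singleton_iff] at hc''
        rcases hc'' with rfl | rfl | rfl
        · exact nbrL hxy hyz hxz h3c hyT hzT hxT hyz (Ne.symm hxy) (Ne.symm hxz) (hT1 hc')
        · exact nbrL hxy hyz hxz h3c hxT hzT hyT hxz hxy (Ne.symm hyz) (hT1 hc')
        · exact nbrL hxy hyz hxz h3c hxT hyT hzT hxy hxz hyz (hT1 hc')
      obtain ⟨u, hu⟩ := hget
      exact ⟨u, G₁.adj_sub hu, hu.snd_mem, (G₁.adj_sub hu).ne'⟩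
    have hDAll : ∀ a' ∈ T, ∀ b' ∈ T, ∀ c' ∈ T, a' ≠ b' → a' ≠ c' → b' ≠ c' →
        ∃ d, (d ∈ G₁.verts \ {a', b'} ∧ Rel G (G₁.verts \ {a', b'}) d c') ∧ G.Adj d a' := by
      intro a' ha' b' hb' c' hc' hh1 hh2 hh3
      rw [hT] at ha' hb' hc'
      exact relCompL hxy hyz hxz h3c ha' hb' hc' hh1 hh2 hh3 (hT1 (by rw [hT]; exact ha'))
        (hT1 (by rw [hT]; exact hc'))
    have hTmemXYZ : ∀ t ∈ T, t = x ∨ t = y ∨ t = z := by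
      intro t ht; rw [hT] at ht; simpa using ht
    have huniq : ∀ (t : V) (k k' : Fin 4), t ∈ B k → t ∈ B k' → k = k' := by
      intro t k k' hk hk'
      by_contra hne
      exact hdisj' k k' hne t hk hk'
    have finish : ∀ B' : Fin 4 → Set V, Good G B' r → HasK4starMinor G s₁ t₁ s₂ t₂ := by
      rintro B' ⟨hg1, hg2, hg3, hg4⟩
      rw [hr] at hg1
      refine ⟨B', ⟨hg1, fun i => ?_, fun i j hij => Set.disjoint_left.mpr (hg3 i j hij)⟩,
        fun i j hij => hg4 i j hij⟩
      exact connected_of_rel ⟨![s₁, t₁, s₂, t₂] i, hg1 i⟩ (hg2 i)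
    have hcoupAdj : ∀ p q : Fin 4, Couple p q → G.Adj (r p) (r q) := by
      intro p q hpq
      rcases hpq with ⟨rfl, rfl⟩ | ⟨rfl, rfl⟩ | ⟨rfl, rfl⟩ | ⟨rfl, rfl⟩
      · exact h₁
      · exact h₁.symm
      · exact h₂
      · exact h₂.symm
    by_cases hxO : ∃ i, x ∈ B i
    · obtain ⟨ix, hxB⟩ := hxO
      by_cases hyO : ∃ i, y ∈ B i
      · obtain ⟨iy, hyB⟩ := hyO
        by_cases hzO : ∃ i, z ∈ B i
        · obtain ⟨iz, hzB⟩ := hzO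
          by_cases e1 : ix = iy
          · by_cases e2 : ix = iz
            · refine finish _ (case1 St hxT hxB ?_ hV₁rel)
              intro t ht k hk
              rcases hTmemXYZ t ht with rfl | rfl | rfl
              exacts [huniq t k ix hk hxB, (huniq t k iy hk hyB).trans e1.symm,
                (huniq t k iz hk hzB).trans e2.symm]
            · refine finish _ (case23 St e2 hxT hzT hxz hxB hzB ?_
                (hCrelAll z hzT) (hnbrAll z hzT))
              intro t ht k hk
              rcases hTmemXYZ t ht with rfl | rfl | rfl
              · exact Or.inl ⟨huniq t k ix hk hxB, hxz⟩
              · exact Or.inl ⟨(huniq t k iy hk hyB).trans e1.symm, hyz⟩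
              · exact Or.inr ⟨huniq t k iz hk hzB, rfl⟩
          · by_cases e2 : ix = iz
            · refine finish _ (case23 St e1 hxT hyT hxy hxB hyB ?_
                (hCrelAll y hyT) (hnbrAll y hyT))
              intro t ht k hk
              rcases hTmemXYZ t ht with rfl | rfl | rfl
              · exact Or.inl ⟨huniq t k ix hk hxB, hxy⟩
              · exact Or.inr ⟨huniq t k iy hk hyB, rfl⟩
              · exact Or.inl ⟨(huniq t k iz hk hzB).trans e2.symm, Ne.symm hyz⟩
            · by_cases e3 : iy = iz
              · refine finish _ (case23 St (Ne.symm e1) hyT hxT (Ne.symm hxy) hyB hxB ?_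
                  (hCrelAll x hxT) (hnbrAll x hxT))
                intro t ht k hk
                rcases hTmemXYZ t ht with rfl | rfl | rfl
                · exact Or.inr ⟨huniq t k ix hk hxB, rfl⟩
                · exact Or.inl ⟨huniq t k iy hk hyB, Ne.symm hxy⟩
                · exact Or.inl ⟨(huniq t k iz hk hzB).trans e3.symm, Ne.symm hxz⟩
              · have hOWNxyz : ∀ t ∈ T, ∀ k, t ∈ B k →
                    (t = x ∧ k = ix) ∨ (t = y ∧ k = iy) ∨ (t = z ∧ k = iz) := by
                  intro t ht k hk
                  rcases hTmemXYZ t ht with rfl | rfl | rfl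
                  exacts [Or.inl ⟨rfl, huniq t k ix hk hxB⟩,
                    Or.inr (Or.inl ⟨rfl, huniq t k iy hk hyB⟩),
                    Or.inr (Or.inr ⟨rfl, huniq t k iz hk hzB⟩)]
                rcases fin4_couple ix iy iz e1 e2 e3 with hcp | hcp | hcp
                · have hDa := hDAll x hxT y hyT z hzT hxy hxz hyz
                  have hDb := hDAll y hyT x hxT z hzT (Ne.symm hxy) hyz hxz
                  rw [Set.pair_comm y x] at hDb
                  exact finish _ (case4 St e1 e2 e3 hxT hyT hzT hxy hxz hyz hxB hyB hzB
                    hOWNxyz (hcoupAdj _ _ hcp) hDa hDb)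
                · have hOWN' : ∀ t ∈ T, ∀ k, t ∈ B k →
                      (t = x ∧ k = ix) ∨ (t = z ∧ k = iz) ∨ (t = y ∧ k = iy) := by
                    intro t ht k hk
                    rcases hOWNxyz t ht k hk with h | h | h
                    exacts [Or.inl h, Or.inr (Or.inr h), Or.inr (Or.inl h)]
                  have hDa := hDAll x hxT z hzT y hyT hxz hxy (Ne.symm hyz)
                  have hDb := hDAll z hzT x hxT y hyT (Ne.symm hxz) (Ne.symm hyz) hxy
                  rw [Set.pair_comm z x] at hDb
                  exact finish _ (case4 St e2 e1 (Ne.symm e3) hxT hzT hyT hxz hxy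
                    (Ne.symm hyz) hxB hzB hyB hOWN' (hcoupAdj _ _ hcp) hDa hDb)
                · have hOWN' : ∀ t ∈ T, ∀ k, t ∈ B k →
                      (t = y ∧ k = iy) ∨ (t = z ∧ k = iz) ∨ (t = x ∧ k = ix) := by
                    intro t ht k hk
                    rcases hOWNxyz t ht k hk with h | h | h
                    exacts [Or.inr (Or.inr h), Or.inl h, Or.inr (Or.inl h)]
                  have hDa := hDAll y hyT z hzT x hxT hyz (Ne.symm hxy) (Ne.symm hxz)
                  have hDb := hDAll z hzT y hyT x hxT (Ne.symm hyz) (Ne.symm hxz) (Ne.symm hxy)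
                  rw [Set.pair_comm z y] at hDb
                  exact finish _ (case4 St e3 (Ne.symm e1) (Ne.symm e2) hyT hzT hxT hyz
                    (Ne.symm hxy) (Ne.symm hxz) hyB hzB hxB hOWN' (hcoupAdj _ _ hcp) hDa hDb)
        · by_cases e1 : ix = iy
          · refine finish _ (case1 St hxT hxB ?_ hV₁rel)
            intro t ht k hk
            rcases hTmemXYZ t ht with rfl | rfl | rfl
            exacts [huniq t k ix hk hxB, (huniq t k iy hk hyB).trans e1.symm,
              absurd ⟨k, hk⟩ hzO]
          · refine finish _ (case23 St e1 hxT hyT hxy hxB hyB ?_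
              (hCrelAll y hyT) (hnbrAll y hyT))
            intro t ht k hk
            rcases hTmemXYZ t ht with rfl | rfl | rfl
            · exact Or.inl ⟨huniq t k ix hk hxB, hxy⟩
            · exact Or.inr ⟨huniq t k iy hk hyB, rfl⟩
            · exact absurd ⟨k, hk⟩ hzO
      · by_cases hzO : ∃ i, z ∈ B i
        · obtain ⟨iz, hzB⟩ := hzO
          by_cases e2 : ix = iz
          · refine finish _ (case1 St hxT hxB ?_ hV₁rel)
            intro t ht k hk
            rcases hTmemXYZ t ht with rfl | rfl | rfl
            exacts [huniq t k ix hk hxB, absurd ⟨k, hk⟩ hyO,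
              (huniq t k iz hk hzB).trans e2.symm]
          · refine finish _ (case23 St e2 hxT hzT hxz hxB hzB ?_
              (hCrelAll z hzT) (hnbrAll z hzT))
            intro t ht k hk
            rcases hTmemXYZ t ht with rfl | rfl | rfl
            · exact Or.inl ⟨huniq t k ix hk hxB, hxz⟩
            · exact absurd ⟨k, hk⟩ hyO
            · exact Or.inr ⟨huniq t k iz hk hzB, rfl⟩
        · refine finish _ (case1 St hxT hxB ?_ hV₁rel)
          intro t ht k hk
          rcases hTmemXYZ t ht with rfl | rfl | rfl
          exacts [huniq t k ix hk hxB, absurd ⟨k, hk⟩ hyO, absurd ⟨k, hk⟩ hzO]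
    · by_cases hyO : ∃ i, y ∈ B i
      · obtain ⟨iy, hyB⟩ := hyO
        by_cases hzO : ∃ i, z ∈ B i
        · obtain ⟨iz, hzB⟩ := hzO
          by_cases e3 : iy = iz
          · refine finish _ (case1 St hyT hyB ?_ hV₁rel)
            intro t ht k hk
            rcases hTmemXYZ t ht with rfl | rfl | rfl
            exacts [absurd ⟨k, hk⟩ hxO, huniq t k iy hk hyB,
              (huniq t k iz hk hzB).trans e3.symm]
          · refine finish _ (case23 St e3 hyT hzT hyz hyB hzB ?_
              (hCrelAll z hzT) (hnbrAll z hzT))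
            intro t ht k hk
            rcases hTmemXYZ t ht with rfl | rfl | rfl
            · exact absurd ⟨k, hk⟩ hxO
            · exact Or.inl ⟨huniq t k iy hk hyB, hyz⟩
            · exact Or.inr ⟨huniq t k iz hk hzB, rfl⟩
        · refine finish _ (case1 St hyT hyB ?_ hV₁rel)
          intro t ht k hk
          rcases hTmemXYZ t ht with rfl | rfl | rfl
          exacts [absurd ⟨k, hk⟩ hxO, huniq t k iy hk hyB, absurd ⟨k, hk⟩ hzO]
      · by_cases hzO : ∃ i, z ∈ B i
        · obtain ⟨iz, hzB⟩ := hzO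
          refine finish _ (case1 St hzT hzB ?_ hV₁rel)
          intro t ht k hk
          rcases hTmemXYZ t ht with rfl | rfl | rfl
          exacts [absurd ⟨k, hk⟩ hxO, absurd ⟨k, hk⟩ hyO, huniq t k iz hk hzB]
        · refine finish _ (case0 St ?_)
          intro t ht k hk
          rcases hTmemXYZ t ht with rfl | rfl | rfl
          exacts [hxO ⟨k, hk⟩, hyO ⟨k, hk⟩, hzO ⟨k, hk⟩]
  · intro hG
    obtain ⟨B, ⟨hroot, hconn, hdisjB⟩, hadjB⟩ := hG
    refine ⟨B, ⟨hroot, fun i => ?_, hdisjB⟩, fun i j hij => ?_⟩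
    · refine connected_of_rel ⟨![s₁, t₁, s₂, t₂] i, hroot i⟩ ?_
      intro u hu v hv
      exact (rel_of_connected (hconn i) hu hv).mono le_sup_left subset_rfl
    · obtain ⟨a, ha, b, hb, hab⟩ := hadjB i j hij
      exact ⟨a, ha, b, hb, (SimpleGraph.sup_adj _ _ _ _).mpr (Or.inl hab)⟩

/-- Lemma on completing a triangle over a 3-separation. -/
theorem triangle_completion_K4star_minor
    {V : Type} [Fintype V] (G : SimpleGraph V) (s₁ t₁ s₂ t₂ x y z : V)
    (h₁ : G.Adj s₁ t₁) (h₂ : G.Adj s₂ t₂)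
    (hd : ([s₁, t₁, s₂, t₂] : List V).Nodup)
    (hxy : x ≠ y) (hyz : y ≠ z) (hxz : x ≠ z)
    (G₁ G₂ : G.Subgraph)
    (hsep : IsKSeparation G G₁ G₂ 3)
    (hset : G₁.verts ∩ G₂.verts = {x, y, z})
    (h3c : IsKConnected 3
      ((G₁.spanningCoe ⊔ SimpleGraph.fromEdgeSet (triEdges3 x y z)).induce G₁.verts))
    (he₁ : s(s₁, t₁) ∉ G₁.edgeSet \ triEdges3 x y z)
    (he₂ : s(s₂, t₂) ∉ G₁.edgeSet \ triEdges3 x y z) :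
    HasK4starMinor (G ⊔ SimpleGraph.fromEdgeSet (triEdges3 x y z)) s₁ t₁ s₂ t₂ ↔
      HasK4starMinor G s₁ t₁ s₂ t₂ :=
  triangle_completion_K4star_minor' G s₁ t₁ s₂ t₂ x y z h₁ h₂ hd hxy hyz hxz G₁ G₂
    hsep hset h3c he₁ he₂
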